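/- arXiv:0911.1923 — 4 statements merged into one kernel-verified Lean document; each statement's English description precedes it below -/
import Mathlib

section
/- Let w ∈ W_n have word form w = i_1 i_2 ⋯ i_k \bar{a} i_{k+1} ⋯ i_n, where i_1, …, i_k and a are strictly positive, and let w_1 ∈ W_n be the element with word form a i_1 i_2 ⋯ i_k i_{k+1} ⋯ i_n. Then w = w_1 s_0 s_1 s_2 ⋯ s_k and ℓ(w) = ℓ(w_1) + k + 1; in particular, appending s_0 s_1 ⋯ s_k to any reduced expression of w_1 yields a reduced expression of w. -/
/-!
The length of a signed permutation is its type `B` inversion number `inv + nsp + neg`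
(Björner–Brenti, Prop. 8.1.1): multiplying on the right by `s_i` changes that number by exactly
one, up when `w(i) < w(i+1)` (with `w(0) = 0`) and down otherwise, and a signed permutation
without descents is the identity. In `w₁` the entries in positions `1, …, k+1` are positive, so
each factor of `w₁ s_0 s_1 ⋯ s_k` is an ascent: `s_0` negates `a` and the following `s_i` move
`ā` past `i_1, …, i_k`. Hence the length grows by exactly `k + 1`.
-/

/-- `w` belongs to the group `W_n` of signed permutations of `I_n = {-n, …, -1, 1, …, n}`:
it is a permutation of `ℤ` commuting with negation and fixing every integer of absolute
value greater than `n` (whence it also fixes `0`). -/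
def IsSigned (n : ℕ) (w : Equiv.Perm ℤ) : Prop :=
  (∀ i : ℤ, w (-i) = -(w i)) ∧ ∀ i : ℤ, (n : ℤ) < |i| → w i = i

/-- the Coxeter generators `s_0, s_1, …` of the signed permutation group:
`s_0 = (-1, 1)` and `s_i = (i, i+1)(-i, -(i+1))`. -/
def genB : ℕ → Equiv.Perm ℤ
  | 0 => Equiv.swap (-1) 1
  | (i + 1) =>
      Equiv.swap ((i : ℤ) + 1) ((i : ℤ) + 2) * Equiv.swap (-((i : ℤ) + 1)) (-((i : ℤ) + 2))

/-- a word in the generators `s_0, …, s_{n-1}` -/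
def IsWordB (n : ℕ) (l : List ℕ) : Prop := ∀ i ∈ l, i < n

/-- the product of the generators along a word (left-to-right) -/
def wordProd (l : List ℕ) : Equiv.Perm ℤ := (l.map genB).prod

/-- the Coxeter length of `w` with respect to `s_0, …, s_{n-1}` -/
noncomputable def lenB (n : ℕ) (w : Equiv.Perm ℤ) : ℕ :=
  sInf {k | ∃ l : List ℕ, IsWordB n l ∧ wordProd l = w ∧ l.length = k}

/-- `l` is a reduced expression for `w` -/
def IsReducedB (n : ℕ) (w : Equiv.Perm ℤ) (l : List ℕ) : Prop :=
  IsWordB n l ∧ wordProd l = w ∧ l.length = lenB n w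

/-- the forbidden patterns: `s_a s_{a+1} s_a` with `a ≥ 1`, and `s_a s_{a-1} s_a`
with `a ≥ 1` (so `s_0 s_1 s_0` is allowed while `s_1 s_0 s_1` is not). -/
def BadTriple (a b c : ℕ) : Prop := a = c ∧ ((1 ≤ a ∧ b = a + 1) ∨ a = b + 1)

/-- membership in `W_b`: no reduced expression contains a forbidden
consecutive triple of generators. -/
def InWb (n : ℕ) (w : Equiv.Perm ℤ) : Prop :=
  IsSigned n w ∧
    ∀ l : List ℕ, IsReducedB n w l → ¬∃ a b c : ℕ, [a, b, c] <:+: l ∧ BadTriple a b c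

/-- the word form of `w`, i.e. the list `w 1, w 2, …, w n` -/
def wordFormB (n : ℕ) (w : Equiv.Perm ℤ) : List ℤ :=
  (List.range n).map fun j => w ((j : ℤ) + 1)

open Finset

lemma genB_zero_apply (x : ℤ) : genB 0 x = if x = 1 then -1 else if x = -1 then 1 else x := by
  simp only [genB, Equiv.swap_apply_def]
  split_ifs <;> omega

lemma genB_succ_apply (m : ℕ) (x : ℤ) :
    genB (m + 1) x =
      if x = (m : ℤ) + 1 then (m : ℤ) + 2 else if x = (m : ℤ) + 2 then (m : ℤ) + 1
      else if x = -((m : ℤ) + 1) then -((m : ℤ) + 2)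
      else if x = -((m : ℤ) + 2) then -((m : ℤ) + 1) else x := by
  simp only [genB, Equiv.Perm.mul_apply, Equiv.swap_apply_def]
  split_ifs <;> omega

lemma genB_mul_self (m : ℕ) : genB m * genB m = 1 := by
  cases m with
  | zero => exact Equiv.swap_mul_self _ _
  | succ m =>
    ext x
    simp only [Equiv.Perm.mul_apply, Equiv.Perm.one_apply, genB_succ_apply]
    split_ifs <;> omega

lemma wordProd_nil : wordProd [] = 1 := rfl

lemma wordProd_append (l l' : List ℕ) : wordProd (l ++ l') = wordProd l * wordProd l' := by
  simp [wordProd]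

lemma wordProd_concat (l : List ℕ) (m : ℕ) : wordProd (l ++ [m]) = wordProd l * genB m := by
  simp [wordProd]

lemma isWordB_range {n t : ℕ} (h : t ≤ n) : IsWordB n (List.range t) := fun i hi => by
  rw [List.mem_range] at hi
  omega

lemma IsWordB.append {n : ℕ} {l l' : List ℕ} (hl : IsWordB n l) (hl' : IsWordB n l') :
    IsWordB n (l ++ l') := fun i hi => (List.mem_append.1 hi).elim (hl i) (hl' i)

namespace IsSigned

variable {n : ℕ} {w v : Equiv.Perm ℤ}

lemma one (n : ℕ) : IsSigned n 1 := ⟨fun _ => rfl, fun _ _ => rfl⟩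

lemma mul (hw : IsSigned n w) (hv : IsSigned n v) : IsSigned n (w * v) :=
  ⟨fun i => by simp only [Equiv.Perm.mul_apply, hv.1, hw.1],
    fun i hi => by simp only [Equiv.Perm.mul_apply, hv.2 i hi, hw.2 i hi]⟩

lemma apply_zero (hw : IsSigned n w) : w 0 = 0 := by
  have := hw.1 0
  simp only [neg_zero] at this
  omega

lemma genB {m : ℕ} (hm : m < n) : IsSigned n (genB m) := by
  cases m with
  | zero =>
    refine ⟨fun i => ?_, fun i hi => ?_⟩
    · simp only [genB_zero_apply]; split_ifs <;> omega
    · rw [lt_abs] at hi; simp only [genB_zero_apply]; split_ifs <;> omega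
  | succ m =>
    refine ⟨fun i => ?_, fun i hi => ?_⟩
    · simp only [genB_succ_apply]; split_ifs <;> omega
    · rw [lt_abs] at hi; simp only [genB_succ_apply]; split_ifs <;> omega

lemma wordProd {l : List ℕ} (hl : IsWordB n l) : IsSigned n (wordProd l) := by
  induction l with
  | nil => exact one n
  | cons m l ih =>
    simpa [_root_.wordProd] using
      (genB (hl m List.mem_cons_self)).mul (ih fun i hi => hl i (List.mem_cons_of_mem m hi))

lemma abs_apply_le (hw : IsSigned n w) {x : ℤ} (hx : |x| ≤ n) : |w x| ≤ n := by
  by_contra! h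
  rw [w.injective (hw.2 (w x) h)] at h
  omega

lemma ext (hw : IsSigned n w) (hv : IsSigned n v) (h : ∀ x : ℤ, 1 ≤ x → x ≤ n → w x = v x) :
    w = v := by
  ext x
  by_cases hx : (n : ℤ) < |x|
  · rw [hw.2 x hx, hv.2 x hx]
  rw [not_lt, abs_le] at hx
  rcases lt_trichotomy x 0 with hneg | rfl | hpos
  · rw [← neg_neg x, hw.1, hv.1, h (-x) (by omega) (by omega)]
  · rw [hw.apply_zero, hv.apply_zero]
  · exact h x hpos hx.2

end IsSigned

/-- Summed over `1 ≤ a ≤ b ≤ n`, the first indicator counts `inv(w)` and the second counts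
`nsp(w)` (pairs `a < b`) and `neg(w)` (pairs `a = b`), in the notation of Björner–Brenti,
Prop. 8.1.1. -/
def pairInvB (w : Equiv.Perm ℤ) : Sym2 ℤ → ℕ :=
  Sym2.lift ⟨fun a b : ℤ => (if a < b ∧ w b < w a ∨ b < a ∧ w a < w b then 1 else 0) +
    if w a + w b < 0 then 1 else 0, fun a b => by simp only [or_comm, add_comm (w a)]⟩

noncomputable def invB (n : ℕ) (w : Equiv.Perm ℤ) : ℕ := ∑ z ∈ (Icc 1 (n : ℤ)).sym2, pairInvB w z

lemma pairInvB_mk (w : Equiv.Perm ℤ) (a b : ℤ) :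
    pairInvB w s(a, b) = (if a < b ∧ w b < w a ∨ b < a ∧ w a < w b then 1 else 0) +
      if w a + w b < 0 then 1 else 0 := rfl

lemma mk_mem_sym2_Icc {n : ℕ} {a b : ℤ} :
    s(a, b) ∈ (Icc 1 (n : ℤ)).sym2 ↔ (1 ≤ a ∧ a ≤ n) ∧ 1 ≤ b ∧ b ≤ n := by
  rw [mk_mem_sym2_iff, mem_Icc, mem_Icc]

lemma invB_one (n : ℕ) : invB n 1 = 0 := by
  refine sum_eq_zero fun z hz => ?_
  induction z using Sym2.ind with
  | _ a b =>
    rw [mk_mem_sym2_Icc] at hz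
    rw [pairInvB_mk]
    split_ifs <;> simp only [Equiv.Perm.coe_one, id_eq] at * <;> omega

lemma sum_sym2_map_of_involutive {α M : Type*} [DecidableEq α] [AddCommMonoid M]
    {S : Finset α} {σ : Equiv.Perm α} (hσ : σ * σ = 1) (hS : ∀ x ∈ S, σ x ∈ S)
    (f : Sym2 α → M) : ∑ z ∈ S.sym2, f (z.map σ) = ∑ z ∈ S.sym2, f z := by
  have hmem : ∀ z ∈ S.sym2, z.map σ ∈ S.sym2 := fun z hz => by
    induction z using Sym2.ind with
    | _ a b => rw [Sym2.map_mk, mk_mem_sym2_iff] at *; exact ⟨hS a hz.1, hS b hz.2⟩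
  have hinv : ∀ z ∈ S.sym2, (z.map σ).map σ = z := fun z _ => by
    rw [Sym2.map_map, ← Equiv.Perm.coe_mul, hσ, Equiv.Perm.coe_one, Sym2.map_id, id]
  exact sum_nbij' (Sym2.map σ) (Sym2.map σ) hmem hmem hinv hinv fun _ _ => rfl

lemma invB_mul_genB_zero {n : ℕ} (hn : 0 < n) {w : Equiv.Perm ℤ} (hw : w (-1) = -w 1)
    (h1 : 0 < w 1) : invB n (w * genB 0) = invB n w + 1 := by
  have hval : ∀ x : ℤ, 1 ≤ x → (w * genB 0) x = if x = 1 then -w 1 else w x := fun x hx => by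
    rw [Equiv.Perm.mul_apply, genB_zero_apply]
    split_ifs <;> omega
  have hD : s(1, 1) ∈ (Icc 1 (n : ℤ)).sym2 := mk_mem_sym2_Icc.2 (by omega)
  unfold invB
  rw [sum_eq_add_sum_sdiff_singleton_of_mem hD, sum_eq_add_sum_sdiff_singleton_of_mem hD]
  have hdiag : pairInvB (w * genB 0) s(1, 1) = pairInvB w s(1, 1) + 1 := by
    simp only [pairInvB_mk, hval 1 le_rfl, if_true]
    split_ifs <;> omega
  rw [hdiag, add_right_comm, sum_congr rfl fun z hz => ?_]
  induction z using Sym2.ind with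
  | _ a b =>
    rw [mem_sdiff, mk_mem_sym2_Icc, mem_singleton, Sym2.eq_iff] at hz
    simp only [pairInvB_mk, hval a (by omega), hval b (by omega)]
    split_ifs <;> subst_vars <;> omega

lemma invB_mul_genB_succ {n m : ℕ} (hm : m + 2 ≤ n) {w : Equiv.Perm ℤ}
    (h : w ((m : ℤ) + 1) < w ((m : ℤ) + 2)) : invB n (w * genB (m + 1)) = invB n w + 1 := by
  set σ := genB (m + 1) with hσ
  have hσS : ∀ x ∈ Icc 1 (n : ℤ), σ x ∈ Icc 1 (n : ℤ) := fun x hx => by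
    rw [mem_Icc] at hx ⊢
    rw [hσ, genB_succ_apply]
    split_ifs <;> omega
  have hD : s((m : ℤ) + 1, (m : ℤ) + 2) ∈ (Icc 1 (n : ℤ)).sym2 := mk_mem_sym2_Icc.2 (by omega)
  have hσ₁ : σ ((m : ℤ) + 1) = (m : ℤ) + 2 := by rw [hσ, genB_succ_apply, if_pos rfl]
  have hσ₂ : σ ((m : ℤ) + 2) = (m : ℤ) + 1 := by
    rw [hσ, genB_succ_apply, if_neg (by omega), if_pos rfl]
  have hswap : pairInvB (w * σ) s((m : ℤ) + 1, (m : ℤ) + 2) =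
      pairInvB w (s((m : ℤ) + 1, (m : ℤ) + 2).map σ) + 1 := by
    rw [Sym2.map_mk, pairInvB_mk, pairInvB_mk, Equiv.Perm.mul_apply, Equiv.Perm.mul_apply, hσ₁,
      hσ₂, add_comm (w _)]
    split_ifs <;> omega
  have hrest : ∀ z ∈ (Icc 1 (n : ℤ)).sym2 \ {s((m : ℤ) + 1, (m : ℤ) + 2)},
      pairInvB (w * σ) z = pairInvB w (z.map σ) := fun z hz => by
    induction z using Sym2.ind with
    | _ a b =>
      rw [mem_sdiff, mk_mem_sym2_Icc, mem_singleton, Sym2.eq_iff] at hz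
      have horder : (a < b ↔ σ a < σ b) ∧ (b < a ↔ σ b < σ a) := by
        rw [hσ, genB_succ_apply, genB_succ_apply]
        split_ifs <;> omega
      rw [Sym2.map_mk, pairInvB_mk, pairInvB_mk, Equiv.Perm.mul_apply, Equiv.Perm.mul_apply]
      congr 1
      exact if_congr (or_congr (and_congr horder.1 Iff.rfl) (and_congr horder.2 Iff.rfl)) rfl rfl
  unfold invB
  rw [sum_eq_add_sum_sdiff_singleton_of_mem hD, sum_congr rfl hrest, hswap, add_right_comm,
    ← sum_eq_add_sum_sdiff_singleton_of_mem hD (fun z => pairInvB w (z.map σ)),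
    sum_sym2_map_of_involutive (genB_mul_self _) hσS]

section Length

variable {n : ℕ} {w : Equiv.Perm ℤ}

lemma invB_mul_genB_of_lt {i : ℕ} (hi : i < n) (hw : IsSigned n w) (h : w i < w (i + 1)) :
    invB n (w * genB i) = invB n w + 1 := by
  cases i with
  | zero => exact invB_mul_genB_zero hi (hw.1 1) (by simpa [hw.apply_zero] using h)
  | succ m =>
    refine invB_mul_genB_succ hi ?_
    rwa [Nat.cast_succ, add_assoc, one_add_one_eq_two] at h

lemma mul_genB_apply_lt_iff {i : ℕ} (hw : IsSigned n w) :
    (w * genB i) i < (w * genB i) (i + 1) ↔ w (i + 1) < w i := by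
  simp only [Equiv.Perm.mul_apply]
  cases i with
  | zero =>
    rw [genB_zero_apply, genB_zero_apply, if_neg (by norm_num), if_neg (by norm_num),
      if_pos (by simp), Nat.cast_zero, zero_add, hw.1, hw.apply_zero]
    omega
  | succ m =>
    rw [genB_succ_apply, genB_succ_apply, if_pos (by push_cast; rfl), if_neg (by push_cast; omega),
      if_pos (by push_cast; ring)]
    push_cast
    rw [add_assoc, one_add_one_eq_two]

lemma invB_mul_genB_of_gt {i : ℕ} (hi : i < n) (hw : IsSigned n w) (h : w (i + 1) < w i) :
    invB n (w * genB i) + 1 = invB n w := by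
  have := invB_mul_genB_of_lt hi (hw.mul (.genB hi)) ((mul_genB_apply_lt_iff hw).2 h)
  rwa [mul_assoc, genB_mul_self, mul_one, eq_comm] at this

lemma invB_mul_genB_le {i : ℕ} (hi : i < n) (hw : IsSigned n w) :
    invB n (w * genB i) ≤ invB n w + 1 := by
  rcases lt_or_gt_of_ne (w.injective.ne (show (i : ℤ) ≠ i + 1 by omega)) with h | h
  · exact (invB_mul_genB_of_lt hi hw h).le
  · have := invB_mul_genB_of_gt hi hw h
    omega

lemma invB_wordProd_le_length {l : List ℕ} (hl : IsWordB n l) : invB n (wordProd l) ≤ l.length := by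
  induction l using List.reverseRecOn with
  | nil => simp [wordProd, invB_one]
  | append_singleton l i ih =>
    have hl' : IsWordB n l := fun j hj => hl j (List.mem_append_left _ hj)
    have hi : i < n := hl i (List.mem_append_right _ (List.mem_singleton_self i))
    rw [wordProd_concat, List.length_append, List.length_singleton]
    exact (invB_mul_genB_le hi (.wordProd hl')).trans (by have := ih hl'; omega)

lemma IsSigned.eq_one_of_forall_lt (hw : IsSigned n w) (h : ∀ i : ℕ, i < n → w i < w (i + 1)) :
    w = 1 := by
  have hge : ∀ i : ℕ, i ≤ n → (i : ℤ) ≤ w i := by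
    intro i
    induction i with
    | zero => simp [hw.apply_zero]
    | succ i ih =>
      intro hi
      have := h i (by omega)
      push_cast
      have := ih (by omega)
      omega
  have hle : ∀ j : ℕ, j ≤ n → w ((n : ℤ) - j) ≤ n - j := by
    intro j
    induction j with
    | zero =>
      intro _
      have := hw.abs_apply_le (x := n) (by simp)
      rw [abs_le] at this
      simpa using this.2
    | succ j ih =>
      intro hj
      have hlt := h (n - (j + 1)) (by omega)
      rw [show ((n - (j + 1) : ℕ) : ℤ) = n - (j + 1 : ℕ) by omega,
        show (n : ℤ) - (j + 1 : ℕ) + 1 = n - j by push_cast; ring] at hlt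
      have := ih (by omega)
      omega
  refine hw.ext (.one n) fun x hx1 hxn => le_antisymm ?_ ?_
  · have := hle (n - x.toNat) (by omega)
    rwa [Nat.cast_sub (by omega), sub_sub_cancel, Int.toNat_of_nonneg (by omega)] at this
  · have := hge x.toNat (by omega)
    rwa [Int.toNat_of_nonneg (by omega)] at this

lemma exists_word_length_eq_invB (hw : IsSigned n w) :
    ∃ l : List ℕ, IsWordB n l ∧ wordProd l = w ∧ l.length = invB n w := by
  induction hN : invB n w using Nat.strong_induction_on generalizing w with
  | _ N ih =>
    by_cases hw1 : w = 1
    · subst hw1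
      exact ⟨[], fun _ h => absurd h List.not_mem_nil, rfl, by rw [← hN, invB_one]; rfl⟩
    obtain ⟨i, hi, hdesc⟩ : ∃ i < n, w (i + 1) < w i := by
      by_contra! hasc
      exact hw1 (hw.eq_one_of_forall_lt fun i hi =>
        (hasc i hi).lt_of_ne (w.injective.ne (by omega)))
    have hstep := invB_mul_genB_of_gt hi hw hdesc
    obtain ⟨l, hl, hprod, hlen⟩ :=
      ih _ (by omega) (hw.mul (.genB hi)) rfl
    refine ⟨l ++ [i], hl.append fun j hj => by rwa [List.mem_singleton.1 hj], ?_, ?_⟩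
    · rw [wordProd_concat, hprod, mul_assoc, genB_mul_self, mul_one]
    · rw [List.length_append, hlen, List.length_singleton, hstep, hN]

lemma lenB_eq_invB (hw : IsSigned n w) : lenB n w = invB n w := by
  obtain ⟨l, hl, hprod, hlen⟩ := exists_word_length_eq_invB hw
  refine le_antisymm (Nat.sInf_le ⟨l, hl, hprod, hlen⟩) (le_csInf ⟨_, l, hl, hprod, hlen⟩ ?_)
  rintro k ⟨l', hl', rfl, rfl⟩
  exact invB_wordProd_le_length hl'

end Length

lemma wordProd_range_apply (t : ℕ) {x : ℤ} (hx : 1 ≤ x) :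
    wordProd (List.range t) x = if x < t then x + 1 else if x = t then -1 else x := by
  induction t generalizing x with
  | zero => rw [List.range_zero, wordProd_nil, Equiv.Perm.one_apply]; split_ifs <;> omega
  | succ t ih =>
    rw [List.range_succ, wordProd_concat, Equiv.Perm.mul_apply]
    cases t with
    | zero =>
      rw [List.range_zero, wordProd_nil, Equiv.Perm.one_apply, genB_zero_apply]
      split_ifs <;> omega
    | succ m =>
      rw [genB_succ_apply]
      split_ifs <;> rw [ih (by omega)] <;> split_ifs <;> omega

lemma invB_mul_wordProd_range {n t : ℕ} (ht : t ≤ n) {v : Equiv.Perm ℤ} (hv : IsSigned n v)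
    (hpos : ∀ j : ℤ, 1 ≤ j → j ≤ t → 0 < v j) :
    invB n (v * wordProd (List.range t)) = invB n v + t := by
  induction t with
  | zero => rw [List.range_zero, wordProd_nil, mul_one, add_zero]
  | succ t ih =>
    have hc : IsSigned n (wordProd (List.range t)) := .wordProd (isWordB_range (by omega))
    have hnonpos : (v * wordProd (List.range t)) t ≤ 0 := by
      rcases Nat.eq_zero_or_pos t with rfl | htpos
      · rw [Nat.cast_zero, (hv.mul hc).apply_zero]
      · rw [Equiv.Perm.mul_apply, wordProd_range_apply t (by omega), if_neg (lt_irrefl _),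
          if_pos rfl, hv.1]
        linarith [hpos 1 le_rfl (by omega)]
    have hpos' : 0 < (v * wordProd (List.range t)) (t + 1) := by
      rw [Equiv.Perm.mul_apply, wordProd_range_apply t (by omega), if_neg (by omega),
        if_neg (by omega)]
      exact hpos _ (by omega) (by push_cast; rfl)
    rw [List.range_succ, wordProd_concat, ← mul_assoc,
      invB_mul_genB_of_lt ht (hv.mul hc) (hnonpos.trans_lt hpos'),
      ih (by omega) fun j hj1 hjt => hpos j hj1 (by omega), add_assoc]

theorem statement1_general (n k : ℕ) (hk : k + 1 ≤ n) (a : ℤ) (ha : 0 < a)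
    (w w₁ : Equiv.Perm ℤ) (hw : IsSigned n w) (hw₁ : IsSigned n w₁)
    (hpos : ∀ j : ℤ, 1 ≤ j → j ≤ (k : ℤ) → 0 < w j)
    (hbar : w ((k : ℤ) + 1) = -a)
    (hw₁head : w₁ 1 = a)
    (hw₁mid : ∀ j : ℤ, 1 ≤ j → j ≤ (k : ℤ) → w₁ (j + 1) = w j)
    (hw₁tail : ∀ j : ℤ, (k : ℤ) + 2 ≤ j → j ≤ (n : ℤ) → w₁ j = w j) :
    w = w₁ * wordProd (List.range (k + 1)) ∧
      lenB n w = lenB n w₁ + (k + 1) ∧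
      ∀ l : List ℕ, IsReducedB n w₁ l → IsReducedB n w (l ++ List.range (k + 1)) := by
  have hprod : w = w₁ * wordProd (List.range (k + 1)) := by
    refine hw.ext (hw₁.mul (.wordProd (isWordB_range hk))) fun x hx1 hxn => ?_
    rw [Equiv.Perm.mul_apply, wordProd_range_apply _ hx1]
    split_ifs with hlt heq
    · rw [hw₁mid x hx1 (by omega)]
    · rw [heq, Nat.cast_succ, hbar, hw₁.1, hw₁head]
    · exact (hw₁tail x (by omega) hxn).symm
  have hw₁pos : ∀ j : ℤ, 1 ≤ j → j ≤ ((k + 1 : ℕ) : ℤ) → 0 < w₁ j := by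
    intro j hj1 hjk
    obtain rfl | hj := eq_or_lt_of_le hj1
    · rwa [hw₁head]
    · rw [← sub_add_cancel j 1, hw₁mid _ (by omega) (by omega)]
      exact hpos _ (by omega) (by omega)
  have hlen : lenB n w = lenB n w₁ + (k + 1) := by
    rw [lenB_eq_invB hw, lenB_eq_invB hw₁, hprod, invB_mul_wordProd_range hk hw₁ hw₁pos]
  refine ⟨hprod, hlen, fun l ⟨hl, hlw₁, hllen⟩ => ⟨hl.append (isWordB_range hk), ?_, ?_⟩⟩
  · rw [wordProd_append, hlw₁, hprod]
  · rw [List.length_append, hllen, List.length_range, hlen]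

/-- Let `w ∈ W_n` have word form `i_1 ⋯ i_k ā i_{k+1} ⋯ i_n` with `i_1, …, i_k, a > 0`,
and let `w₁ ∈ W_n` have word form `a i_1 ⋯ i_k i_{k+1} ⋯ i_n`.  Then
`w = w₁ s_0 s_1 ⋯ s_k`, `ℓ(w) = ℓ(w₁) + k + 1`, and appending `s_0 s_1 ⋯ s_k` to any
reduced expression of `w₁` yields a reduced expression of `w`. -/
theorem statement1 (n k : ℕ) (hn : 1 ≤ n) (hk : k + 1 ≤ n) (a : ℤ) (ha : 0 < a)
    (w w₁ : Equiv.Perm ℤ) (hw : IsSigned n w) (hw₁ : IsSigned n w₁)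
    (hpos : ∀ j : ℤ, 1 ≤ j → j ≤ (k : ℤ) → 0 < w j)
    (hbar : w ((k : ℤ) + 1) = -a)
    (hw₁head : w₁ 1 = a)
    (hw₁mid : ∀ j : ℤ, 1 ≤ j → j ≤ (k : ℤ) → w₁ (j + 1) = w j)
    (hw₁tail : ∀ j : ℤ, (k : ℤ) + 2 ≤ j → j ≤ (n : ℤ) → w₁ j = w j) :
    w = w₁ * wordProd (List.range (k + 1)) ∧
      lenB n w = lenB n w₁ + (k + 1) ∧
      ∀ l : List ℕ, IsReducedB n w₁ l → IsReducedB n w (l ++ List.range (k + 1)) :=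
  statement1_general n k hk a ha w w₁ hw hw₁ hpos hbar hw₁head hw₁mid hw₁tail
end

section
/- Let n ≥ 3, let q ∈ ℂ with q ∉ {0, 1, −1}, let m ∈ ℤ, and set Q = i q^m (i the imaginary unit). Then the assignment T_j ↦ U_j + q for j = 1, …, n−1 and T_0 ↦ i(q − q^{−1}) U_0 + Q (equivalently, C_j ↦ U_j and C_0 ↦ i(q − q^{−1}) U_0) induces a well-defined isomorphism of ℂ-algebras TLB_{n,q,Q} → b_n(q, m). -/
noncomputable section

/-- the free `ℂ`-algebra on generators indexed by `Fin n` -/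
abbrev FreeB (n : ℕ) := FreeAlgebra ℂ (Fin n)

/-- the `i`-th generator -/
def XB {n : ℕ} (i : Fin n) : FreeB n := FreeAlgebra.ι ℂ i

/-- a scalar, viewed inside the free algebra -/
def cB {n : ℕ} (z : ℂ) : FreeB n := algebraMap ℂ (FreeB n) z

/-- The defining relations of `TLB_{n,q,Q} = H_n / J_n`: the type `B` Hecke algebra
relations on `T_0, …, T_{n-1}` together with the two relations generating `J_n`,
namely `C_1 C_2 C_1 = C_1` and `C_1 C_0 C_1 = [2]_{Q/q} C_1`, where `C_0 = T_0 - Q`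
and `C_i = T_i - q`. -/
inductive TLBRel (n : ℕ) (q Q : ℂ) : FreeB n → FreeB n → Prop
  | braidA (i j : Fin n) (hi : 1 ≤ (i : ℕ)) (hj : (j : ℕ) = (i : ℕ) + 1) :
      TLBRel n q Q (XB i * XB j * XB i) (XB j * XB i * XB j)
  | braidB (i j : Fin n) (hi : (i : ℕ) = 0) (hj : (j : ℕ) = 1) :
      TLBRel n q Q (XB i * XB j * XB i * XB j) (XB j * XB i * XB j * XB i)
  | comm (i j : Fin n) (h : (i : ℕ) + 1 < (j : ℕ)) :
      TLBRel n q Q (XB i * XB j) (XB j * XB i)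
  | quad (i : Fin n) (hi : 1 ≤ (i : ℕ)) :
      TLBRel n q Q ((XB i - cB q) * (XB i + cB q⁻¹)) 0
  | quad0 (i : Fin n) (hi : (i : ℕ) = 0) :
      TLBRel n q Q ((XB i - cB Q) * (XB i + cB Q⁻¹)) 0
  | blob1 (i j : Fin n) (hi : (i : ℕ) = 1) (hj : (j : ℕ) = 2) :
      TLBRel n q Q ((XB i - cB q) * (XB j - cB q) * (XB i - cB q)) (XB i - cB q)
  | blob0 (i z : Fin n) (hi : (i : ℕ) = 1) (hz : (z : ℕ) = 0) :
      TLBRel n q Q ((XB i - cB q) * (XB z - cB Q) * (XB i - cB q))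
        (cB (Q / q + q / Q) * (XB i - cB q))

/-- the Gaussian integer `[a] = (q^a - q^{-a})/(q - q^{-1})` -/
def gauss (q : ℂ) (a : ℤ) : ℂ := (q ^ a - q ^ (-a)) / (q - q⁻¹)

/-- The defining relations of the blob algebra `b_n(q, m)` on generators
`U_0, …, U_{n-1}`. -/
inductive BlobRel (n : ℕ) (q : ℂ) (m : ℤ) : FreeB n → FreeB n → Prop
  | upDown (i j : Fin n) (hi : 1 ≤ (i : ℕ)) (hj : (j : ℕ) = (i : ℕ) + 1) :
      BlobRel n q m (XB i * XB j * XB i) (XB i)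
  | downUp (i j : Fin n) (hi : 1 ≤ (i : ℕ)) (hj : (j : ℕ) = (i : ℕ) + 1) :
      BlobRel n q m (XB j * XB i * XB j) (XB j)
  | blob (i z : Fin n) (hi : (i : ℕ) = 1) (hz : (z : ℕ) = 0) :
      BlobRel n q m (XB i * XB z * XB i) (cB (gauss q (m - 1)) * XB i)
  | sq (i : Fin n) (hi : 1 ≤ (i : ℕ)) :
      BlobRel n q m (XB i * XB i) (cB (-gauss q 2) * XB i)
  | sq0 (i : Fin n) (hi : (i : ℕ) = 0) :
      BlobRel n q m (XB i * XB i) (cB (-gauss q m) * XB i)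
  | comm (i j : Fin n) (h : (i : ℕ) + 1 < (j : ℕ)) :
      BlobRel n q m (XB i * XB j) (XB j * XB i)

/-- `TLB_{n,q,Q} = H_n / J_n` -/
abbrev TLB (n : ℕ) (q Q : ℂ) := RingQuot (TLBRel n q Q)

/-- the blob algebra `b_n(q, m)` -/
abbrev Blob (n : ℕ) (q : ℂ) (m : ℤ) := RingQuot (BlobRel n q m)

/-!
Writing `C_i = T_i - q` and `C_0 = T_0 - Q`, the quadratic Hecke relations say
`C_i² = -[2] C_i` and `C_0² = -(Q + Q⁻¹) C_0`; since `Q = i q^m`, we have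
`Q + Q⁻¹ = i (q - q⁻¹) [m]` and `Q/q + q/Q = i (q - q⁻¹) [m-1]`, so after rescaling `C_0` these
are the blob relations for `U_0` and `U_1 U_0 U_1`. Modulo the quadratic relations, the braid
relation `T_i T_{i+1} T_i = T_{i+1} T_i T_{i+1}` is equivalent to
`C_i C_{i+1} C_i - C_i = C_{i+1} C_i C_{i+1} - C_{i+1}`, and the type `B` braid relation follows
from the blob relations by expansion. The one relation of `b_n` not visibly imposed in `TLB` is
`C_i C_{i+1} C_i = C_i` for `i ≥ 2`; it follows from the case `i = 1` by conjugating with the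
unit `T_i T_{i+1} T_{i+2}`, which maps `T_i ↦ T_{i+1} ↦ T_{i+2}`.
-/

open Complex

theorem map_cB {n : ℕ} {A : Type*} [Semiring A] [Algebra ℂ A] (f : FreeB n →ₐ[ℂ] A) (z : ℂ) :
    f (cB z) = z • 1 := by
  rw [cB, f.commutes, Algebra.algebraMap_eq_smul_one]

section HeckeIdentities

variable {k R : Type*} [CommRing k] [Ring R] [Algebra k R]

theorem smul_mul_smul_self {x : R} {a : k} (h : x * x = a • x) (c : k) :
    c • x * (c • x) = (c * a) • (c • x) := by
  rw [smul_mul_smul_comm, h, smul_smul, smul_smul, mul_right_comm]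

theorem sub_mul_add_eq_zero_iff (y : R) (s t : k) :
    (y - s • 1) * (y + t • 1) = 0 ↔ (y - s • 1) * (y - s • 1) = -(s + t) • (y - s • 1) := by
  have expand :
      (y - s • 1) * (y + t • 1) = (y - s • 1) * (y - s • 1) + (s + t) • (y - s • 1) := by
    simp only [mul_add, mul_sub, sub_mul, smul_mul_assoc, mul_smul_comm, mul_one, one_mul]
    module
  rw [expand, add_eq_zero_iff_eq_neg, neg_smul]

theorem isUnit_of_sub_mul_add_eq_zero {y : R} {s t : k} (h : (y - s • 1) * (y + t • 1) = 0)
    (hst : s * t = 1) : IsUnit y := by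
  have hsq : y * y = (s - t) • y + 1 := by
    simp only [mul_add, sub_mul, smul_mul_assoc, mul_smul_comm, mul_one, one_mul] at h
    linear_combination (norm := module) h + hst • (1 : R)
  refine ⟨⟨y, y - (s - t) • 1, ?_, ?_⟩, rfl⟩ <;>
    simp only [mul_sub, sub_mul, mul_smul_comm, smul_mul_assoc, mul_one, one_mul, hsq,
      add_sub_cancel_left]

theorem add_smul_one_braid_sub {x y : R} {s d : k} (hx : x * x = d • x) (hy : y * y = d • y)
    (hs : s * s + d * s + 1 = 0) :
    (x + s • 1) * (y + s • 1) * (x + s • 1) - (y + s • 1) * (x + s • 1) * (y + s • 1)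
      = (x * y * x - x) - (y * x * y - y) := by
  simp only [mul_add, add_mul, smul_mul_assoc, mul_smul_comm, mul_one, one_mul, hx, hy]
  linear_combination (norm := module) hs • (x - y)

theorem add_smul_one_braid {x y : R} {s d : k} (hx : x * x = d • x) (hy : y * y = d • y)
    (hs : s * s + d * s + 1 = 0) (hxyx : x * y * x = x) (hyxy : y * x * y = y) :
    (x + s • 1) * (y + s • 1) * (x + s • 1) = (y + s • 1) * (x + s • 1) * (y + s • 1) := by
  rw [← sub_eq_zero, add_smul_one_braid_sub hx hy hs, hxyx, hyxy, sub_self, sub_self, sub_zero]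

theorem tl_right_of_add_smul_one_braid {x y : R} {s d : k} (hx : x * x = d • x)
    (hy : y * y = d • y) (hs : s * s + d * s + 1 = 0)
    (hbraid : (x + s • 1) * (y + s • 1) * (x + s • 1) = (y + s • 1) * (x + s • 1) * (y + s • 1))
    (hxyx : x * y * x = x) : y * x * y = y := by
  have key := add_smul_one_braid_sub hx hy hs
  rw [hbraid, sub_self, hxyx, sub_self, zero_sub, eq_comm, neg_eq_zero, sub_eq_zero] at key
  exact key

theorem add_smul_one_braidB {a y : R} {s Q α δ g : k} (ha : a * a = α • a)
    (hy : y * y = δ • y) (hyay : y * a * y = g • y) (h : g + s * α + Q * δ + 2 * Q * s = 0) :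
    (a + Q • 1) * (y + s • 1) * (a + Q • 1) * (y + s • 1)
      = (y + s • 1) * (a + Q • 1) * (y + s • 1) * (a + Q • 1) := by
  have hayay : a * (y * (a * y)) = g • (a * y) := by rw [← mul_assoc y, hyay, mul_smul_comm]
  have hyaya : y * (a * (y * a)) = g • (y * a) := by
    rw [← mul_assoc a, ← mul_assoc y, ← mul_assoc y, hyay, smul_mul_assoc]
  simp only [mul_add, add_mul, smul_mul_assoc, mul_smul_comm, mul_one, one_mul, mul_assoc,
    hayay, hyaya, ha, hy]
  linear_combination (norm := module) h • (a * y - y * a)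

theorem Commute.add_smul_one {x y : R} (h : Commute x y) (s t : k) :
    Commute (x + s • 1) (y + t • 1) := by
  apply_rules [Commute.add_left, Commute.add_right, Commute.smul_left, Commute.smul_right,
    Commute.one_left, Commute.one_right]

theorem Commute.sub_smul_one {x y : R} (h : Commute x y) (s t : k) :
    Commute (x - s • 1) (y - t • 1) := by
  apply_rules [Commute.sub_left, Commute.sub_right, Commute.smul_left, Commute.smul_right,
    Commute.one_left, Commute.one_right]

theorem semiconjBy_mul_mul_left {M : Type*} [Semigroup M] {x y z : M} (hxy : x * y * x = y * x * y)
    (hxz : Commute x z) : SemiconjBy (x * y * z) x y :=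
  calc x * y * z * x = x * y * x * z := by rw [mul_assoc _ z, ← hxz.eq, ← mul_assoc]
    _ = y * (x * y * z) := by rw [hxy]; simp only [mul_assoc]

theorem semiconjBy_mul_mul_right {M : Type*} [Semigroup M] {x y z : M}
    (hyz : y * z * y = z * y * z) (hxz : Commute x z) : SemiconjBy (x * y * z) y z :=
  calc x * y * z * y = x * z * y * z := by simp only [mul_assoc, hyz]
    _ = z * (x * y * z) := by rw [hxz.eq]; simp only [mul_assoc]

theorem sub_smul_one_tl_of_semiconjBy {g x y z : R} (hg : IsUnit g) (hxy : SemiconjBy g x y)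
    (hyz : SemiconjBy g y z) (s : k) (h : (x - s • 1) * (y - s • 1) * (x - s • 1) = x - s • 1) :
    (y - s • 1) * (z - s • 1) * (y - s • 1) = y - s • 1 := by
  have hscalar : SemiconjBy g (s • 1 : R) (s • 1) := (SemiconjBy.one_right g).smul_right s
  have hx := hxy.sub_right hscalar
  have hy := hyz.sub_right hscalar
  have hxyx := (hx.mul_right hy).mul_right hx
  rw [h] at hxyx
  exact hg.mul_right_cancel (hxyx.eq.symm.trans hx.eq)

end HeckeIdentities

section Scalars

variable {q Q : ℂ} {m : ℤ}

theorem sub_inv_ne_zero (hq0 : q ≠ 0) (hq1 : q ≠ 1) (hqm1 : q ≠ -1) : q - q⁻¹ ≠ 0 := by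
  intro h
  have hfactor : (q - 1) * (q + 1) = 0 := by field_simp at h; linear_combination h
  rcases mul_eq_zero.mp hfactor with h' | h'
  · exact hq1 (sub_eq_zero.mp h')
  · exact hqm1 (eq_neg_of_add_eq_zero_left h')

theorem ne_zero_of_sub_inv_ne_zero (hq : q - q⁻¹ ≠ 0) : q ≠ 0 := by
  rintro rfl
  simp at hq

theorem gauss_two (hq : q - q⁻¹ ≠ 0) : gauss q 2 = q + q⁻¹ := by
  have hq0 := ne_zero_of_sub_inv_ne_zero hq
  rw [gauss, div_eq_iff hq, zpow_neg, zpow_ofNat]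
  field_simp
  ring

theorem mul_gauss (hq : q - q⁻¹ ≠ 0) (a : ℤ) :
    I * (q - q⁻¹) * gauss q a = I * (q ^ a - q ^ (-a)) := by
  rw [gauss, mul_assoc, mul_div_cancel₀ _ hq]

theorem add_inv_eq_mul_gauss (hq : q - q⁻¹ ≠ 0) (hQ : Q = I * q ^ m) :
    Q + Q⁻¹ = I * (q - q⁻¹) * gauss q m := by
  rw [mul_gauss hq, hQ, mul_inv, inv_I, zpow_neg]
  ring

theorem div_add_div_eq_mul_gauss (hq : q - q⁻¹ ≠ 0) (hQ : Q = I * q ^ m) :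
    Q / q + q / Q = I * (q - q⁻¹) * gauss q (m - 1) := by
  have hq0 := ne_zero_of_sub_inv_ne_zero hq
  rw [mul_gauss hq, neg_sub, zpow_sub₀ hq0, zpow_sub₀ hq0, zpow_one, hQ, div_mul_eq_div_div,
    div_I]
  ring

theorem mul_self_sub_add_inv_mul_add_one (hq0 : q ≠ 0) : q * q + -(q + q⁻¹) * q + 1 = 0 := by
  linear_combination -inv_mul_cancel₀ hq0

end Scalars

namespace TLB

def T (n : ℕ) (q Q : ℂ) (i : Fin n) : TLB n q Q := RingQuot.mkAlgHom ℂ (TLBRel n q Q) (XB i)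

variable {n : ℕ} {q Q : ℂ}

theorem T_braid {i j : Fin n} (hi : 1 ≤ (i : ℕ)) (hj : (j : ℕ) = i + 1) :
    T n q Q i * T n q Q j * T n q Q i = T n q Q j * T n q Q i * T n q Q j := by
  simpa only [T, map_mul] using RingQuot.mkAlgHom_rel ℂ (TLBRel.braidA i j hi hj)

theorem T_commute {i j : Fin n} (h : (i : ℕ) + 1 < j) : Commute (T n q Q i) (T n q Q j) := by
  simpa only [T, map_mul, commute_iff_eq] using
    RingQuot.mkAlgHom_rel ℂ (TLBRel.comm (q := q) (Q := Q) i j h)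

theorem T_quad {i : Fin n} (hi : 1 ≤ (i : ℕ)) :
    (T n q Q i - q • 1) * (T n q Q i + q⁻¹ • 1) = 0 := by
  simpa only [T, map_mul, map_sub, map_add, map_zero, map_cB] using
    RingQuot.mkAlgHom_rel ℂ (TLBRel.quad (q := q) (Q := Q) i hi)

theorem T_quad_zero {i : Fin n} (hi : (i : ℕ) = 0) :
    (T n q Q i - Q • 1) * (T n q Q i + Q⁻¹ • 1) = 0 := by
  simpa only [T, map_mul, map_sub, map_add, map_zero, map_cB] using
    RingQuot.mkAlgHom_rel ℂ (TLBRel.quad0 (q := q) (Q := Q) i hi)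

theorem T_blob_one_two {i j : Fin n} (hi : (i : ℕ) = 1) (hj : (j : ℕ) = 2) :
    (T n q Q i - q • 1) * (T n q Q j - q • 1) * (T n q Q i - q • 1) = T n q Q i - q • 1 := by
  simpa only [T, map_mul, map_sub, map_cB] using
    RingQuot.mkAlgHom_rel ℂ (TLBRel.blob1 (q := q) (Q := Q) i j hi hj)

theorem T_blob_one_zero {i z : Fin n} (hi : (i : ℕ) = 1) (hz : (z : ℕ) = 0) :
    (T n q Q i - q • 1) * (T n q Q z - Q • 1) * (T n q Q i - q • 1)
      = (Q / q + q / Q) • (T n q Q i - q • 1) := by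
  simpa only [T, map_mul, map_sub, map_cB, smul_one_mul] using
    RingQuot.mkAlgHom_rel ℂ (TLBRel.blob0 (q := q) (Q := Q) i z hi hz)

theorem T_sub_mul_self {i : Fin n} (hi : 1 ≤ (i : ℕ)) :
    (T n q Q i - q • 1) * (T n q Q i - q • 1) = -(q + q⁻¹) • (T n q Q i - q • 1) :=
  (sub_mul_add_eq_zero_iff _ _ _).mp (T_quad hi)

theorem T_zero_sub_mul_self {i : Fin n} (hi : (i : ℕ) = 0) :
    (T n q Q i - Q • 1) * (T n q Q i - Q • 1) = -(Q + Q⁻¹) • (T n q Q i - Q • 1) :=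
  (sub_mul_add_eq_zero_iff _ _ _).mp (T_quad_zero hi)

theorem isUnit_T (hq0 : q ≠ 0) {i : Fin n} (hi : 1 ≤ (i : ℕ)) : IsUnit (T n q Q i) :=
  isUnit_of_sub_mul_add_eq_zero (T_quad hi) (mul_inv_cancel₀ hq0)

theorem T_tl_left (hq0 : q ≠ 0) {i j : Fin n} (hi : 1 ≤ (i : ℕ)) (hj : (j : ℕ) = i + 1) :
    (T n q Q i - q • 1) * (T n q Q j - q • 1) * (T n q Q i - q • 1) = T n q Q i - q • 1 := by
  obtain ⟨k, hk, hik⟩ : ∃ k, 1 ≤ k ∧ (i : ℕ) = k := ⟨_, hi, rfl⟩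
  induction k, hk using Nat.le_induction generalizing i j with
  | base => exact T_blob_one_two hik (by omega)
  | succ k hk ih =>
    obtain ⟨h, hh⟩ : ∃ h : Fin n, (h : ℕ) = k := ⟨⟨k, by omega⟩, rfl⟩
    have hhi : T n q Q h * T n q Q i * T n q Q h = T n q Q i * T n q Q h * T n q Q i :=
      T_braid (by omega) (by omega)
    have hij : T n q Q i * T n q Q j * T n q Q i = T n q Q j * T n q Q i * T n q Q j :=
      T_braid (by omega) (by omega)
    have hhj : Commute (T n q Q h) (T n q Q j) := T_commute (by omega)
    have hunit : IsUnit (T n q Q h * T n q Q i * T n q Q j) :=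
      ((isUnit_T hq0 (by omega)).mul (isUnit_T hq0 (by omega))).mul (isUnit_T hq0 (by omega))
    exact sub_smul_one_tl_of_semiconjBy hunit (semiconjBy_mul_mul_left hhi hhj)
      (semiconjBy_mul_mul_right hij hhj) q (ih (by omega) (by omega) hh)

theorem T_tl_right (hq0 : q ≠ 0) {i j : Fin n} (hi : 1 ≤ (i : ℕ)) (hj : (j : ℕ) = i + 1) :
    (T n q Q j - q • 1) * (T n q Q i - q • 1) * (T n q Q j - q • 1) = T n q Q j - q • 1 :=
  tl_right_of_add_smul_one_braid (T_sub_mul_self hi) (T_sub_mul_self (by omega))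
    (mul_self_sub_add_inv_mul_add_one hq0) (by simpa only [sub_add_cancel] using T_braid hi hj)
    (T_tl_left hq0 hi hj)

end TLB

namespace Blob

def U (n : ℕ) (q : ℂ) (m : ℤ) (i : Fin n) : Blob n q m :=
  RingQuot.mkAlgHom ℂ (BlobRel n q m) (XB i)

variable {n : ℕ} {q : ℂ} {m : ℤ}

theorem U_tl_left {i j : Fin n} (hi : 1 ≤ (i : ℕ)) (hj : (j : ℕ) = i + 1) :
    U n q m i * U n q m j * U n q m i = U n q m i := by
  simpa only [U, map_mul] using
    RingQuot.mkAlgHom_rel ℂ (BlobRel.upDown (q := q) (m := m) i j hi hj)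

theorem U_tl_right {i j : Fin n} (hi : 1 ≤ (i : ℕ)) (hj : (j : ℕ) = i + 1) :
    U n q m j * U n q m i * U n q m j = U n q m j := by
  simpa only [U, map_mul] using
    RingQuot.mkAlgHom_rel ℂ (BlobRel.downUp (q := q) (m := m) i j hi hj)

theorem U_blob {i z : Fin n} (hi : (i : ℕ) = 1) (hz : (z : ℕ) = 0) :
    U n q m i * U n q m z * U n q m i = gauss q (m - 1) • U n q m i := by
  simpa only [U, map_mul, map_cB, smul_one_mul] using
    RingQuot.mkAlgHom_rel ℂ (BlobRel.blob (q := q) (m := m) i z hi hz)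

theorem U_mul_self {i : Fin n} (hi : 1 ≤ (i : ℕ)) :
    U n q m i * U n q m i = (-gauss q 2) • U n q m i := by
  simpa only [U, map_mul, map_cB, smul_one_mul] using
    RingQuot.mkAlgHom_rel ℂ (BlobRel.sq (q := q) (m := m) i hi)

theorem U_zero_mul_self {i : Fin n} (hi : (i : ℕ) = 0) :
    U n q m i * U n q m i = (-gauss q m) • U n q m i := by
  simpa only [U, map_mul, map_cB, smul_one_mul] using
    RingQuot.mkAlgHom_rel ℂ (BlobRel.sq0 (q := q) (m := m) i hi)

theorem U_commute {i j : Fin n} (h : (i : ℕ) + 1 < j) : Commute (U n q m i) (U n q m j) := by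
  simpa only [U, map_mul, commute_iff_eq] using
    RingQuot.mkAlgHom_rel ℂ (BlobRel.comm (q := q) (m := m) i j h)

end Blob

open TLB Blob

section Isomorphism

variable {n : ℕ} {q Q : ℂ} {m : ℤ}

def toBlobFree (n : ℕ) (q : ℂ) (m : ℤ) (Q : ℂ) : FreeB n →ₐ[ℂ] Blob n q m :=
  FreeAlgebra.lift ℂ fun i ↦
    if (i : ℕ) = 0 then (I * (q - q⁻¹)) • U n q m i + Q • 1 else U n q m i + q • 1

def toTLBFree (n : ℕ) (q Q : ℂ) : FreeB n →ₐ[ℂ] TLB n q Q :=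
  FreeAlgebra.lift ℂ fun i ↦
    if (i : ℕ) = 0 then (I * (q - q⁻¹))⁻¹ • (T n q Q i - Q • 1) else T n q Q i - q • 1

theorem toBlobFree_XB_zero {i : Fin n} (hi : (i : ℕ) = 0) :
    toBlobFree n q m Q (XB i) = (I * (q - q⁻¹)) • U n q m i + Q • 1 := by
  simp [toBlobFree, XB, hi]

theorem toBlobFree_XB_of_ne_zero {i : Fin n} (hi : (i : ℕ) ≠ 0) :
    toBlobFree n q m Q (XB i) = U n q m i + q • 1 := by
  simp [toBlobFree, XB, hi]

theorem toTLBFree_XB_zero {i : Fin n} (hi : (i : ℕ) = 0) :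
    toTLBFree n q Q (XB i) = (I * (q - q⁻¹))⁻¹ • (T n q Q i - Q • 1) := by
  simp [toTLBFree, XB, hi]

theorem toTLBFree_XB_of_ne_zero {i : Fin n} (hi : (i : ℕ) ≠ 0) :
    toTLBFree n q Q (XB i) = T n q Q i - q • 1 := by
  simp [toTLBFree, XB, hi]

theorem toBlobFree_rel (hq : q - q⁻¹ ≠ 0) (hQ : Q = I * q ^ m) ⦃x y : FreeB n⦄
    (h : TLBRel n q Q x y) : toBlobFree n q m Q x = toBlobFree n q m Q y := by
  have hq0 := ne_zero_of_sub_inv_ne_zero hq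
  induction h with
  | braidA i j hi hj =>
    simp only [map_mul, toBlobFree_XB_of_ne_zero (i := i) (by omega),
      toBlobFree_XB_of_ne_zero (i := j) (by omega)]
    exact add_smul_one_braid (U_mul_self hi) (U_mul_self (by omega))
      (by rw [gauss_two hq]; exact mul_self_sub_add_inv_mul_add_one hq0) (U_tl_left hi hj)
      (U_tl_right hi hj)
  | braidB i j hi hj =>
    simp only [map_mul, toBlobFree_XB_zero hi, toBlobFree_XB_of_ne_zero (i := j) (by omega)]
    have hblob : U n q m j * ((I * (q - q⁻¹)) • U n q m i) * U n q m j
        = (I * (q - q⁻¹) * gauss q (m - 1)) • U n q m j := by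
      rw [mul_smul_comm, smul_mul_assoc, U_blob hj hi, smul_smul]
    refine add_smul_one_braidB (smul_mul_smul_self (U_zero_mul_self hi) _)
      (U_mul_self (by omega)) hblob ?_
    linear_combination (div_add_div_eq_mul_gauss hq hQ).symm
      - q * (add_inv_eq_mul_gauss hq hQ).symm - Q * gauss_two hq
  | comm i j hij =>
    simp only [map_mul, toBlobFree_XB_of_ne_zero (i := j) (by omega)]
    by_cases hi : (i : ℕ) = 0
    · rw [toBlobFree_XB_zero hi]
      exact (((U_commute hij).smul_left _).add_smul_one Q q).eq
    · rw [toBlobFree_XB_of_ne_zero hi]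
      exact ((U_commute hij).add_smul_one q q).eq
  | quad i hi =>
    simp only [map_mul, map_sub, map_add, map_zero, map_cB,
      toBlobFree_XB_of_ne_zero (i := i) (by omega)]
    rw [sub_mul_add_eq_zero_iff, add_sub_cancel_right, U_mul_self hi, gauss_two hq]
  | quad0 i hi =>
    simp only [map_mul, map_sub, map_add, map_zero, map_cB, toBlobFree_XB_zero hi]
    rw [sub_mul_add_eq_zero_iff, add_sub_cancel_right, smul_mul_smul_self (U_zero_mul_self hi),
      add_inv_eq_mul_gauss hq hQ, mul_neg]
  | blob1 i j hi hj =>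
    simp only [map_mul, map_sub, map_cB, toBlobFree_XB_of_ne_zero (i := i) (by omega),
      toBlobFree_XB_of_ne_zero (i := j) (by omega), add_sub_cancel_right]
    exact U_tl_left (i := i) (j := j) (by omega) (by omega)
  | blob0 i z hi hz =>
    simp only [map_mul, map_sub, map_cB, smul_one_mul,
      toBlobFree_XB_of_ne_zero (i := i) (by omega), toBlobFree_XB_zero hz, add_sub_cancel_right]
    rw [mul_smul_comm, smul_mul_assoc, U_blob hi hz, smul_smul, div_add_div_eq_mul_gauss hq hQ]

theorem toTLBFree_rel (hq : q - q⁻¹ ≠ 0) (hQ : Q = I * q ^ m) ⦃x y : FreeB n⦄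
    (h : BlobRel n q m x y) : toTLBFree n q Q x = toTLBFree n q Q y := by
  have hq0 := ne_zero_of_sub_inv_ne_zero hq
  have hc : I * (q - q⁻¹) ≠ 0 := mul_ne_zero I_ne_zero hq
  induction h with
  | upDown i j hi hj =>
    simp only [map_mul, toTLBFree_XB_of_ne_zero (i := i) (by omega),
      toTLBFree_XB_of_ne_zero (i := j) (by omega)]
    exact T_tl_left hq0 hi hj
  | downUp i j hi hj =>
    simp only [map_mul, toTLBFree_XB_of_ne_zero (i := i) (by omega),
      toTLBFree_XB_of_ne_zero (i := j) (by omega)]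
    exact T_tl_right hq0 hi hj
  | blob i z hi hz =>
    simp only [map_mul, map_cB, smul_one_mul,
      toTLBFree_XB_of_ne_zero (i := i) (by omega), toTLBFree_XB_zero hz]
    rw [mul_smul_comm, smul_mul_assoc, T_blob_one_zero hi hz, smul_smul,
      div_add_div_eq_mul_gauss hq hQ, inv_mul_cancel_left₀ hc]
  | sq i hi =>
    simp only [map_mul, map_cB, smul_one_mul,
      toTLBFree_XB_of_ne_zero (i := i) (by omega)]
    rw [T_sub_mul_self hi, gauss_two hq]
  | sq0 i hi =>
    simp only [map_mul, map_cB, smul_one_mul, toTLBFree_XB_zero hi]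
    rw [smul_mul_smul_self (T_zero_sub_mul_self hi), add_inv_eq_mul_gauss hq hQ,
      mul_neg, inv_mul_cancel_left₀ hc]
  | comm i j hij =>
    simp only [map_mul, toTLBFree_XB_of_ne_zero (i := j) (by omega)]
    by_cases hi : (i : ℕ) = 0
    · rw [toTLBFree_XB_zero hi]
      exact (((T_commute hij).sub_smul_one Q q).smul_left _).eq
    · rw [toTLBFree_XB_of_ne_zero hi]
      exact ((T_commute hij).sub_smul_one q q).eq

def toBlob (hq : q - q⁻¹ ≠ 0) (hQ : Q = I * q ^ m) : TLB n q Q →ₐ[ℂ] Blob n q m :=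
  RingQuot.liftAlgHom ℂ ⟨toBlobFree n q m Q, toBlobFree_rel hq hQ⟩

def toTLB (hq : q - q⁻¹ ≠ 0) (hQ : Q = I * q ^ m) : Blob n q m →ₐ[ℂ] TLB n q Q :=
  RingQuot.liftAlgHom ℂ ⟨toTLBFree n q Q, toTLBFree_rel hq hQ⟩

theorem toBlob_T (hq : q - q⁻¹ ≠ 0) (hQ : Q = I * q ^ m) (i : Fin n) :
    toBlob hq hQ (T n q Q i) = toBlobFree n q m Q (XB i) :=
  RingQuot.liftAlgHom_mkAlgHom_apply _ _ _ _

theorem toTLB_U (hq : q - q⁻¹ ≠ 0) (hQ : Q = I * q ^ m) (i : Fin n) :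
    toTLB hq hQ (U n q m i) = toTLBFree n q Q (XB i) :=
  RingQuot.liftAlgHom_mkAlgHom_apply _ _ _ _

theorem toBlob_comp_toTLB (hq : q - q⁻¹ ≠ 0) (hQ : Q = I * q ^ m) :
    (toBlob (n := n) hq hQ).comp (toTLB hq hQ) = AlgHom.id ℂ (Blob n q m) := by
  have hc : I * (q - q⁻¹) ≠ 0 := mul_ne_zero I_ne_zero hq
  refine RingQuot.ringQuot_ext' _ _ _ (FreeAlgebra.hom_ext (funext fun i ↦ ?_))
  change toBlob hq hQ (toTLB hq hQ (U n q m i)) = U n q m i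
  by_cases hi : (i : ℕ) = 0
  · rw [toTLB_U, toTLBFree_XB_zero hi, map_smul, map_sub, toBlob_T, toBlobFree_XB_zero hi,
      map_smul, map_one, add_sub_cancel_right, inv_smul_smul₀ hc]
  · rw [toTLB_U, toTLBFree_XB_of_ne_zero hi, map_sub, toBlob_T, toBlobFree_XB_of_ne_zero hi,
      map_smul, map_one, add_sub_cancel_right]

theorem toTLB_comp_toBlob (hq : q - q⁻¹ ≠ 0) (hQ : Q = I * q ^ m) :
    (toTLB (n := n) hq hQ).comp (toBlob hq hQ) = AlgHom.id ℂ (TLB n q Q) := by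
  have hc : I * (q - q⁻¹) ≠ 0 := mul_ne_zero I_ne_zero hq
  refine RingQuot.ringQuot_ext' _ _ _ (FreeAlgebra.hom_ext (funext fun i ↦ ?_))
  change toTLB hq hQ (toBlob hq hQ (T n q Q i)) = T n q Q i
  by_cases hi : (i : ℕ) = 0
  · rw [toBlob_T, toBlobFree_XB_zero hi, map_add, map_smul, toTLB_U, toTLBFree_XB_zero hi,
      map_smul, map_one, smul_inv_smul₀ hc, sub_add_cancel]
  · rw [toBlob_T, toBlobFree_XB_of_ne_zero hi, map_add, toTLB_U, toTLBFree_XB_of_ne_zero hi,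
      map_smul, map_one, sub_add_cancel]

end Isomorphism

theorem statement10_general (n : ℕ) (q : ℂ) (hq0 : q ≠ 0) (hq1 : q ≠ 1)
    (hqm1 : q ≠ -1) (m : ℤ) (Q : ℂ) (hQ : Q = Complex.I * q ^ m) :
    ∃ φ : TLB n q Q ≃ₐ[ℂ] Blob n q m,
      ∀ i : Fin n,
        (1 ≤ (i : ℕ) →
          φ (RingQuot.mkAlgHom ℂ (TLBRel n q Q) (XB i)) =
            RingQuot.mkAlgHom ℂ (BlobRel n q m) (XB i + cB q)) ∧
        ((i : ℕ) = 0 →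
          φ (RingQuot.mkAlgHom ℂ (TLBRel n q Q) (XB i)) =
            RingQuot.mkAlgHom ℂ (BlobRel n q m)
              (cB (Complex.I * (q - q⁻¹)) * XB i + cB Q)) := by
  have hq := sub_inv_ne_zero hq0 hq1 hqm1
  refine ⟨AlgEquiv.ofAlgHom (toBlob hq hQ) (toTLB hq hQ) (toBlob_comp_toTLB hq hQ)
    (toTLB_comp_toBlob hq hQ), fun i ↦ ⟨fun hi ↦ ?_, fun hi ↦ ?_⟩⟩
  · rw [AlgEquiv.ofAlgHom_apply, ← T, toBlob_T, toBlobFree_XB_of_ne_zero (by omega)]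
    rw [map_add, map_cB, U]
  · rw [AlgEquiv.ofAlgHom_apply, ← T, toBlob_T, toBlobFree_XB_zero hi]
    rw [map_add, map_mul, map_cB, map_cB, smul_one_mul, U]

/-- For `n ≥ 3`, `q ∉ {0, 1, -1}`, `m ∈ ℤ` and `Q = i q^m`, the assignment
`T_j ↦ U_j + q` for `j = 1, …, n-1` and `T_0 ↦ i (q - q⁻¹) U_0 + Q` (equivalently
`C_j ↦ U_j` and `C_0 ↦ i (q - q⁻¹) U_0`) induces a well-defined isomorphism of
`ℂ`-algebras `TLB_{n,q,Q} → b_n(q, m)`. -/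
theorem statement10 (n : ℕ) (hn : 3 ≤ n) (q : ℂ) (hq0 : q ≠ 0) (hq1 : q ≠ 1)
    (hqm1 : q ≠ -1) (m : ℤ) (Q : ℂ) (hQ : Q = Complex.I * q ^ m) :
    ∃ φ : TLB n q Q ≃ₐ[ℂ] Blob n q m,
      ∀ i : Fin n,
        (1 ≤ (i : ℕ) →
          φ (RingQuot.mkAlgHom ℂ (TLBRel n q Q) (XB i)) =
            RingQuot.mkAlgHom ℂ (BlobRel n q m) (XB i + cB q)) ∧
        ((i : ℕ) = 0 →
          φ (RingQuot.mkAlgHom ℂ (TLBRel n q Q) (XB i)) =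
            RingQuot.mkAlgHom ℂ (BlobRel n q m)
              (cB (Complex.I * (q - q⁻¹)) * XB i + cB Q)) :=
  statement10_general n q hq0 hq1 hqm1 m Q hQ

end
end

section
/- With the operators T_0, T_1, …, T_{n−1} on V^{⊗n} defined as in the context (n ≥ 3), the endomorphisms (T_1 − q)(T_2 − q)(T_1 − q) − (T_1 − q) and (T_1 − q)(T_0 − Q)(T_1 − q) − [2]_{Q/q}(T_1 − q) of V^{⊗n} are both zero; that is, the generators of the ideal J_n of the type B Hecke algebra annihilate the tensor space V^{⊗n}. -/
noncomputable section

/-- The tensor space `V^{⊗n}` for `V = ℂv_1 ⊕ ℂv_2`, realized with basis indexed by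
sequences `s : Fin n → Fin 2` (the value `0` encoding `v_1` and `1` encoding `v_2`). -/
abbrev TS (n : ℕ) := (Fin n → Fin 2) →₀ ℂ

/-- the basis vector `v_{s 1} ⊗ ⋯ ⊗ v_{s n}` -/
def bas {n : ℕ} (s : Fin n → Fin 2) : TS n := Finsupp.single s 1

/-- the operator determined by its values on basis vectors -/
def mkOp {n : ℕ} (f : (Fin n → Fin 2) → TS n) : Module.End ℂ (TS n) :=
  Finsupp.lift (TS n) ℂ (Fin n → Fin 2) f

/-- the sequence obtained from `s` by interchanging the entries at positions `i`, `j` -/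
def swapAt {n : ℕ} (s : Fin n → Fin 2) (i j : Fin n) : Fin n → Fin 2 :=
  Function.update (Function.update s i (s j)) j (s i)

/-- `T_k = Id^{⊗(k-1)} ⊗ R ⊗ Id^{⊗(n-k-1)}`, for `1 ≤ k ≤ n-1`, where
`R(v_j ⊗ v_j) = q v_j ⊗ v_j`, `R(v_2 ⊗ v_1) = v_1 ⊗ v_2`, and
`R(v_1 ⊗ v_2) = v_2 ⊗ v_1 + (q - q⁻¹) v_1 ⊗ v_2`. -/
def Tk (n : ℕ) [NeZero n] (q : ℂ) (k : ℕ) : Module.End ℂ (TS n) :=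
  mkOp fun s =>
    let i : Fin n := Fin.ofNat n (k - 1 : ℕ)
    let j : Fin n := Fin.ofNat n (k : ℕ)
    if s i = s j then q • bas s
    else if s i = 1 then bas (swapAt s i j)
    else bas (swapAt s i j) + (q - q⁻¹) • bas s

/-- `T_k⁻¹ = T_k - (q - q⁻¹)·Id` -/
def TopInv (n : ℕ) [NeZero n] (q : ℂ) (k : ℕ) : Module.End ℂ (TS n) :=
  Tk n q k - (q - q⁻¹) • 1

/-- `S_k`, for `1 ≤ k ≤ n-1`: multiplies a basis vector by `q` if its `k`-th and
`(k+1)`-st factors agree, and interchanges them otherwise. -/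
def Sop (n : ℕ) [NeZero n] (q : ℂ) (k : ℕ) : Module.End ℂ (TS n) :=
  mkOp fun s =>
    let i : Fin n := Fin.ofNat n (k - 1 : ℕ)
    let j : Fin n := Fin.ofNat n (k : ℕ)
    if s i = s j then q • bas s else bas (swapAt s i j)

/-- `ϖ`: multiplies a basis vector by `Q` if its first factor is `v_1`
and by `-Q⁻¹` if it is `v_2`. -/
def piOp (n : ℕ) [NeZero n] (Q : ℂ) : Module.End ℂ (TS n) :=
  mkOp fun s => if s 0 = 0 then Q • bas s else (-Q⁻¹) • bas s

/-- `T_0 := T_1⁻¹ T_2⁻¹ ⋯ T_{n-1}⁻¹ S_{n-1} S_{n-2} ⋯ S_1 ϖ` (with `ϖ` applied first) -/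
def Tzero (n : ℕ) [NeZero n] (q Q : ℂ) : Module.End ℂ (TS n) :=
  ((List.range (n - 1)).map fun k => TopInv n q (k + 1)).prod *
    (((List.range (n - 1)).map fun k => Sop n q (k + 1)).reverse).prod * piOp n Q

/-!
Both identities are checked on the basis vectors `v_{s 1} ⊗ ⋯ ⊗ v_{s n}`. The first one only
involves three adjacent tensor factors. For the second, write
`T_0 = T_1⁻¹ (T_2⁻¹ ⋯ T_{n-1}⁻¹) (S_{n-1} ⋯ S_1) ϖ` and use `(T_1 - q) T_1⁻¹ = -q (T_1 - q)`.
The chain `S_{n-1} ⋯ S_1` carries the first tensor factor to the last place and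
`T_2⁻¹ ⋯ T_{n-1}⁻¹` carries it back to the second place; the powers of `q` picked up on the way
cancel, and every correction term of a `T_k⁻¹` is killed by `T_1 - q`. Hence, modulo `T_1 - q`,
`T_0` acts on a basis vector with distinct first two factors as `-q` times its `ϖ`-eigenvalue
times the swap of those two factors, and the identity reduces to a computation in the
two-dimensional space spanned by such a vector and its swap.
-/

open Fin.NatCast

lemma fin_two_eq_zero_or_one (v : Fin 2) : v = 0 ∨ v = 1 := by fin_cases v <;> simp

section Positions
variable {n : ℕ} [NeZero n]

lemma eq_natCast_iff {i : Fin n} {k : ℕ} (hk : k < n) : i = (k : Fin n) ↔ (i : ℕ) = k := by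
  rw [Fin.ext_iff, Fin.val_cast_of_lt hk]

lemma natCast_ne_natCast {a b : ℕ} (ha : a < n) (hb : b < n) (h : a ≠ b) :
    (a : Fin n) ≠ (b : Fin n) := by
  rwa [Ne, Fin.ext_iff, Fin.val_cast_of_lt ha, Fin.val_cast_of_lt hb]

lemma zero_ne_natCast {k : ℕ} (hk : k < n) (h : k ≠ 0) : (0 : Fin n) ≠ (k : Fin n) := by
  rw [Ne, Fin.ext_iff, Fin.val_zero, Fin.val_cast_of_lt hk]
  exact h.symm

lemma apply_eq_apply_natCast (s : Fin n → Fin 2) {i : Fin n} {k : ℕ} (h : (i : ℕ) = k) :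
    s i = s k := by
  congr; ext; rw [← h]; simp

end Positions

section Basis
variable {n : ℕ}

@[simp]
lemma mkOp_bas (f : (Fin n → Fin 2) → TS n) (s : Fin n → Fin 2) : mkOp f (bas s) = f s := by
  simp [mkOp, bas]

lemma endo_ext_bas {F G : Module.End ℂ (TS n)} (h : ∀ s, F (bas s) = G (bas s)) : F = G :=
  Finsupp.basisSingleOne.ext fun s => by simpa [bas] using h s

lemma swapAt_eq_comp (s : Fin n → Fin 2) (i j : Fin n) : swapAt s i j = s ∘ Equiv.swap i j := by
  funext x
  simp only [swapAt, Function.update_apply, Function.comp_apply, Equiv.swap_apply_def]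
  split_ifs <;> simp_all

@[simp]
lemma swapAt_apply_left (s : Fin n → Fin 2) (i j : Fin n) : swapAt s i j i = s j := by
  simp [swapAt_eq_comp]

@[simp]
lemma swapAt_apply_right (s : Fin n → Fin 2) (i j : Fin n) : swapAt s i j j = s i := by
  simp [swapAt_eq_comp]

lemma swapAt_apply_of_ne (s : Fin n → Fin 2) {i j x : Fin n} (hi : x ≠ i) (hj : x ≠ j) :
    swapAt s i j x = s x := by
  simp [swapAt_eq_comp, Equiv.swap_apply_of_ne_of_ne hi hj]

@[simp]
lemma swapAt_swapAt (s : Fin n → Fin 2) (i j : Fin n) : swapAt (swapAt s i j) i j = s := by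
  funext x; simp [swapAt_eq_comp]

lemma swapAt_of_eq {s : Fin n → Fin 2} {i j : Fin n} (h : s i = s j) : swapAt s i j = s := by
  funext x
  simp only [swapAt, Function.update_apply]
  split_ifs <;> simp_all

end Basis

section Operators
variable {n : ℕ} [NeZero n] (q : ℂ) (k : ℕ) (s : Fin n → Fin 2)

-- Positions are 0-based: `T_{k+1}` and `S_{k+1}` act on the entries `s k` and `s (k + 1)`.
lemma Tk_bas : Tk n q (k + 1) (bas s) =
    if s k = s (k + 1 : ℕ) then q • bas s
    else if s k = 1 then bas (swapAt s k (k + 1 : ℕ))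
    else bas (swapAt s k (k + 1 : ℕ)) + (q - q⁻¹) • bas s := by
  rw [Tk, mkOp_bas]; rfl

lemma Tk_sub_bas : (Tk n q (k + 1) - q • 1) (bas s) =
    if s k = s (k + 1 : ℕ) then 0
    else if s k = 1 then bas (swapAt s k (k + 1 : ℕ)) - q • bas s
    else bas (swapAt s k (k + 1 : ℕ)) - q⁻¹ • bas s := by
  rw [LinearMap.sub_apply, LinearMap.smul_apply, Module.End.one_apply, Tk_bas]
  split_ifs
  · exact sub_self _
  · rfl
  · module

lemma Tk_one_sub_bas : (Tk n q 1 - q • 1) (bas s) =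
    if s 0 = s 1 then 0
    else if s 0 = 1 then bas (swapAt s 0 1) - q • bas s
    else bas (swapAt s 0 1) - q⁻¹ • bas s := by
  have h := Tk_sub_bas q 0 s
  rwa [Nat.cast_zero, zero_add, Nat.cast_one] at h

lemma TopInv_bas : TopInv n q (k + 1) (bas s) =
    if s k = s (k + 1 : ℕ) then q⁻¹ • bas s
    else if s k = 1 then bas (swapAt s k (k + 1 : ℕ)) - (q - q⁻¹) • bas s
    else bas (swapAt s k (k + 1 : ℕ)) := by
  rw [TopInv, LinearMap.sub_apply, LinearMap.smul_apply, Module.End.one_apply, Tk_bas]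
  split_ifs
  · module
  · rfl
  · module

lemma Sop_bas : Sop n q (k + 1) (bas s) =
    if s k = s (k + 1 : ℕ) then q • bas s else bas (swapAt s k (k + 1 : ℕ)) := by
  rw [Sop, mkOp_bas]; rfl

lemma piOp_bas (Q : ℂ) : piOp n Q (bas s) = if s 0 = 0 then Q • bas s else (-Q⁻¹) • bas s := by
  rw [piOp, mkOp_bas]

end Operators

section Relations
variable {n : ℕ} [NeZero n] {q : ℂ} {k : ℕ}

lemma Tk_mul_TopInv (hq : q ≠ 0) : Tk n q (k + 1) * TopInv n q (k + 1) = 1 := by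
  refine endo_ext_bas fun s => ?_
  rw [Module.End.mul_apply, Module.End.one_apply, TopInv_bas]
  obtain h0 | h0 := fin_two_eq_zero_or_one (s k) <;>
    obtain h1 | h1 := fin_two_eq_zero_or_one (s (k + 1 : ℕ)) <;>
    simp only [h0, h1, Tk_bas, swapAt_apply_left, swapAt_apply_right, swapAt_swapAt, map_sub,
      map_smul, Fin.reduceEq, reduceIte] <;>
    first | module | rw [smul_smul, inv_mul_cancel₀ hq, one_smul]

lemma Tk_sub_mul_TopInv (hq : q ≠ 0) :
    (Tk n q (k + 1) - q • 1) * TopInv n q (k + 1) = (-q) • (Tk n q (k + 1) - q • 1) := by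
  have hinv (x : TS n) : Tk n q (k + 1) (TopInv n q (k + 1) x) = x := by
    rw [← Module.End.mul_apply, Tk_mul_TopInv hq, Module.End.one_apply]
  refine LinearMap.ext fun x => ?_
  rw [Module.End.mul_apply, LinearMap.sub_apply, hinv]
  simp only [LinearMap.sub_apply, LinearMap.smul_apply, Module.End.one_apply, TopInv, map_sub,
    map_smul]
  match_scalars <;> field_simp
  ring

lemma Tk_sub_mul_Tk_sub_mul_Tk_sub (hq : q ≠ 0) (hk : k + 2 < n) :
    (Tk n q (k + 1) - q • 1) * (Tk n q (k + 2) - q • 1) * (Tk n q (k + 1) - q • 1) =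
      Tk n q (k + 1) - q • 1 := by
  have h01 := natCast_ne_natCast (show k < n by omega) (show k + 1 < n by omega) (by omega)
  have h12 := natCast_ne_natCast (show k + 1 < n by omega) hk (by omega)
  have h02 := natCast_ne_natCast (show k < n by omega) hk (by omega)
  refine endo_ext_bas fun s => ?_
  rw [Module.End.mul_apply, Module.End.mul_apply, Tk_sub_bas]
  obtain h0 | h0 := fin_two_eq_zero_or_one (s k) <;>
    obtain h1 | h1 := fin_two_eq_zero_or_one (s (k + 1 : ℕ)) <;>
    obtain h2 | h2 := fin_two_eq_zero_or_one (s (k + 2 : ℕ)) <;>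
    simp only [h0, h1, h2, Tk_sub_bas, swapAt_apply_left, swapAt_apply_right, swapAt_swapAt,
      swapAt_apply_of_ne _ h02.symm h12.symm, swapAt_apply_of_ne _ h01 h02, map_sub, map_smul,
      map_zero, Fin.reduceEq, reduceIte] <;>
    match_scalars <;> field_simp

end Relations

section Sequences
variable {n : ℕ} [NeZero n]

def moveFrontTo (s : Fin n → Fin 2) (l : ℕ) : Fin n → Fin 2 := fun i =>
  if (i : ℕ) < l then s ((i : ℕ) + 1 : ℕ) else if (i : ℕ) = l then s 0 else s i

def moveToSecond (s : Fin n → Fin 2) (l : ℕ) : Fin n → Fin 2 := fun i =>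
  if (i : ℕ) = 1 then s (l + 1 : ℕ)
  else if 2 ≤ (i : ℕ) ∧ (i : ℕ) ≤ l + 1 then s ((i : ℕ) - 1 : ℕ)
  else s i

def countEq (s : Fin n → Fin 2) (v : Fin 2) (l : ℕ) : ℕ :=
  ((Finset.range l).filter fun k => s (k + 1 : ℕ) = v).card

lemma moveFrontTo_zero (s : Fin n → Fin 2) : moveFrontTo s 0 = s := by
  funext i
  simp only [moveFrontTo]
  split_ifs with h1 h2
  · omega
  · exact (apply_eq_apply_natCast s h2).symm
  · rfl

lemma moveFrontTo_apply_of_lt (s : Fin n → Fin 2) {k l : ℕ} (hk : k < l) (hl : l < n) :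
    moveFrontTo s l k = s (k + 1 : ℕ) := by
  simp only [moveFrontTo, Fin.val_cast_of_lt (hk.trans hl), if_pos hk]

lemma moveFrontTo_apply_zero (s : Fin n → Fin 2) {l : ℕ} (hl : 0 < l) :
    moveFrontTo s l 0 = s 1 := by
  simp only [moveFrontTo, Fin.val_zero, if_pos hl, zero_add, Nat.cast_one]

lemma moveFrontTo_apply_self (s : Fin n → Fin 2) {l : ℕ} (hl : l < n) :
    moveFrontTo s l l = s 0 := by
  simp only [moveFrontTo, Fin.val_cast_of_lt hl, lt_irrefl, if_false, if_true]

lemma moveFrontTo_apply_succ (s : Fin n → Fin 2) {l : ℕ} (hl : l + 1 < n) :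
    moveFrontTo s l (l + 1 : ℕ) = s (l + 1 : ℕ) := by
  simp only [moveFrontTo, Fin.val_cast_of_lt hl]
  rw [if_neg (by omega), if_neg (by omega)]

lemma swapAt_moveFrontTo (s : Fin n → Fin 2) {l : ℕ} (hl : l + 1 < n) :
    swapAt (moveFrontTo s l) l (l + 1 : ℕ) = moveFrontTo s (l + 1) := by
  funext i
  simp only [swapAt_eq_comp, Function.comp_apply, Equiv.swap_apply_def, moveFrontTo,
    eq_natCast_iff hl, eq_natCast_iff (show l < n by omega)]
  have := i.isLt
  split_ifs <;> (try simp (disch := omega) only [Fin.val_cast_of_lt, not_true_eq_false] at *) <;>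
    first | omega | rfl | (congr 1; ext; simp (disch := omega) only [Fin.val_cast_of_lt]; omega)

lemma moveToSecond_zero (s : Fin n → Fin 2) : moveToSecond s 0 = s := by
  funext i
  simp only [moveToSecond]
  split_ifs with h1 h2
  · exact (apply_eq_apply_natCast s h1).symm
  · omega
  · rfl

lemma moveToSecond_apply_zero (s : Fin n → Fin 2) (l : ℕ) : moveToSecond s l 0 = s 0 := by
  simp [moveToSecond]

lemma moveToSecond_apply_one (s : Fin n → Fin 2) {l : ℕ} (hn : 1 < n) :
    moveToSecond s l 1 = s (l + 1 : ℕ) := by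
  rw [moveToSecond, if_pos (by rw [Fin.val_one', Nat.mod_eq_of_lt hn])]

lemma moveToSecond_swapAt (s : Fin n → Fin 2) {l : ℕ} (hl : l + 2 < n) :
    moveToSecond (swapAt s (l + 1 : ℕ) (l + 2 : ℕ)) l = moveToSecond s (l + 1) := by
  funext i
  simp only [swapAt_eq_comp, Function.comp_apply, Equiv.swap_apply_def, moveToSecond,
    eq_natCast_iff hl, eq_natCast_iff (show l + 1 < n by omega)]
  have := i.isLt
  split_ifs <;> (try simp (disch := omega) only [Fin.val_cast_of_lt] at *) <;>
    first | omega | rfl | (congr 1; ext; simp (disch := omega) only [Fin.val_cast_of_lt]; omega)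

lemma moveToSecond_moveFrontTo (s : Fin n → Fin 2) {l : ℕ} (hl : n = l + 2) :
    moveToSecond (moveFrontTo s (l + 1)) l = swapAt s 0 1 := by
  rw [← Nat.cast_zero, ← Nat.cast_one (R := Fin n)]
  funext i
  simp only [swapAt_eq_comp, Function.comp_apply, Equiv.swap_apply_def, moveToSecond, moveFrontTo,
    eq_natCast_iff (show 0 < n by omega), eq_natCast_iff (show 1 < n by omega)]
  have := i.isLt
  split_ifs <;>
    (try simp (disch := omega) only [Fin.val_cast_of_lt, Nat.cast_zero, not_true_eq_false] at *) <;>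
    first | omega | rfl | (congr 1; ext; simp (disch := omega) only [Fin.val_cast_of_lt]; omega)

lemma countEq_succ (s : Fin n → Fin 2) (v : Fin 2) (l : ℕ) :
    countEq s v (l + 1) = countEq s v l + if s (l + 1 : ℕ) = v then 1 else 0 := by
  simp only [countEq, Finset.card_filter, Finset.sum_range_succ]

lemma countEq_congr {s t : Fin n → Fin 2} (v : Fin 2) {l : ℕ}
    (h : ∀ k < l, s (k + 1 : ℕ) = t (k + 1 : ℕ)) : countEq s v l = countEq t v l := by
  simp only [countEq, Finset.card_filter]
  exact Finset.sum_congr rfl fun k hk => by rw [h k (Finset.mem_range.mp hk)]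

lemma countEq_moveFrontTo (s : Fin n → Fin 2) {v : Fin 2} {l : ℕ} (hl : l + 1 < n)
    (h : s 1 ≠ v) : countEq s v (l + 1) = countEq (moveFrontTo s (l + 1)) v l := by
  simp only [countEq, Finset.card_filter]
  rw [Finset.sum_range_succ', zero_add, Nat.cast_one, if_neg h, add_zero]
  refine Finset.sum_congr rfl fun k hk => ?_
  rw [moveFrontTo_apply_of_lt s (by simp at hk; omega) hl]

lemma countEq_swapAt (s : Fin n → Fin 2) (v : Fin 2) {l : ℕ} (hl : l + 2 < n) :
    countEq (swapAt s (l + 1 : ℕ) (l + 2 : ℕ)) v l = countEq s v l :=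
  countEq_congr v fun k hk => swapAt_apply_of_ne s
    (natCast_ne_natCast (by omega) (by omega) (by omega))
    (natCast_ne_natCast (by omega) (by omega) (by omega))

end Sequences

section Chains
variable (n : ℕ) [NeZero n] (q : ℂ)

/-- `T_2⁻¹ T_3⁻¹ ⋯ T_{l+1}⁻¹` -/
def TopInvProd (l : ℕ) : Module.End ℂ (TS n) :=
  ((List.range l).map fun k => TopInv n q (k + 2)).prod

/-- `S_l ⋯ S_2 S_1` -/
def SopProd (l : ℕ) : Module.End ℂ (TS n) :=
  ((List.range l).map fun k => Sop n q (k + 1)).reverse.prod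

variable {n q}

lemma TopInvProd_succ (l : ℕ) :
    TopInvProd n q (l + 1) = TopInvProd n q l * TopInv n q (l + 2) := by
  simp [TopInvProd, List.range_succ]

lemma SopProd_succ (l : ℕ) : SopProd n q (l + 1) = Sop n q (l + 1) * SopProd n q l := by
  simp [SopProd, List.range_succ]

lemma Tzero_eq (Q : ℂ) {l : ℕ} (hl : n = l + 2) :
    Tzero n q Q = TopInv n q 1 * TopInvProd n q l * SopProd n q (l + 1) * piOp n Q := by
  have hprod : ((List.range (l + 1)).map fun k => TopInv n q (k + 1)).prod =
      TopInv n q 1 * TopInvProd n q l := by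
    rw [List.range_succ_eq_map, List.map_cons, List.prod_cons, List.map_map]
    rfl
  rw [Tzero, show n - 1 = l + 1 by omega, hprod, SopProd]

lemma SopProd_bas {l : ℕ} (hl : l < n) (s : Fin n → Fin 2) :
    SopProd n q l (bas s) = q ^ countEq s (s 0) l • bas (moveFrontTo s l) := by
  induction l with
  | zero => simp [SopProd, countEq, moveFrontTo_zero]
  | succ l ih =>
    rw [SopProd_succ, Module.End.mul_apply, ih (by omega), map_smul, Sop_bas,
      moveFrontTo_apply_self s (by omega), moveFrontTo_apply_succ s hl, countEq_succ,
      ← swapAt_moveFrontTo s hl]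
    by_cases h : s 0 = s (l + 1 : ℕ)
    · rw [if_pos h, if_pos h.symm, swapAt_of_eq (by rwa [moveFrontTo_apply_self s (by omega),
        moveFrontTo_apply_succ s hl]), smul_smul, pow_succ]
    · rw [if_neg h, if_neg (Ne.symm h), add_zero]

lemma Tk_sub_TopInvProd_bas {l : ℕ} (hl : l + 1 < n) (s : Fin n → Fin 2)
    (h : s 0 = 1 ∨ s (l + 1 : ℕ) = 1) :
    (Tk n q 1 - q • 1) (TopInvProd n q l (bas s)) =
      q⁻¹ ^ countEq s (s (l + 1 : ℕ)) l • (Tk n q 1 - q • 1) (bas (moveToSecond s l)) := by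
  induction l generalizing s with
  | zero => simp [TopInvProd, countEq, moveToSecond_zero]
  | succ l ih =>
    rw [TopInvProd_succ, Module.End.mul_apply, TopInv_bas, countEq_succ]
    rw [show l + 1 + 1 = l + 2 from rfl] at hl h ⊢
    have hswap : (Tk n q 1 - q • 1) (TopInvProd n q l (bas (swapAt s (l + 1 : ℕ) (l + 2 : ℕ)))) =
        q⁻¹ ^ countEq s (s (l + 2 : ℕ)) l • (Tk n q 1 - q • 1) (bas (moveToSecond s (l + 1))) := by
      have h0 : swapAt s (l + 1 : ℕ) (l + 2 : ℕ) 0 = s 0 :=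
        swapAt_apply_of_ne s (zero_ne_natCast (by omega) (by omega)) (zero_ne_natCast hl (by omega))
      rw [ih (by omega) _ (by rwa [h0, swapAt_apply_left]), swapAt_apply_left,
        countEq_swapAt s _ hl, moveToSecond_swapAt s hl]
    by_cases heq : s (l + 1 : ℕ) = s (l + 2 : ℕ)
    · rw [if_pos heq, if_pos heq, map_smul, map_smul, ih (by omega) s (by rwa [heq]), heq,
        ← moveToSecond_swapAt s hl, swapAt_of_eq heq, smul_smul, pow_succ']
    rw [if_neg heq, if_neg heq, add_zero]
    obtain hs | hs := fin_two_eq_zero_or_one (s (l + 1 : ℕ))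
    · rw [if_neg (by rw [hs]; decide), hswap]
    -- The correction term starts with `v_2 ⊗ v_2` once moved back, so `T_1 - q` kills it.
    have hs0 : s 0 = 1 := h.resolve_right fun h2 => heq (hs.trans h2.symm)
    have hkill : (Tk n q 1 - q • 1) (bas (moveToSecond s l)) = 0 := by
      rw [Tk_one_sub_bas, if_pos (by rw [moveToSecond_apply_zero,
        moveToSecond_apply_one _ (by omega), hs0, hs])]
    rw [if_pos hs, map_sub, map_sub, hswap, map_smul, map_smul, ih (by omega) s (Or.inr hs), hkill,
      smul_zero, smul_zero, sub_zero]

lemma Tk_sub_TopInvProd_SopProd_bas (hq : q ≠ 0) {l : ℕ} (hl : n = l + 2) (s : Fin n → Fin 2)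
    (h : s 0 ≠ s 1) :
    (Tk n q 1 - q • 1) (TopInvProd n q l (SopProd n q (l + 1) (bas s))) =
      (Tk n q 1 - q • 1) (bas (swapAt s 0 1)) := by
  have hcond : moveFrontTo s (l + 1) 0 = 1 ∨ moveFrontTo s (l + 1) (l + 1 : ℕ) = 1 := by
    rw [moveFrontTo_apply_zero s (by omega), moveFrontTo_apply_self s (by omega)]
    obtain h0 | h0 := fin_two_eq_zero_or_one (s 0) <;>
      obtain h1 | h1 := fin_two_eq_zero_or_one (s 1) <;> simp_all
  rw [SopProd_bas (by omega), map_smul, map_smul, Tk_sub_TopInvProd_bas (by omega) _ hcond,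
    moveFrontTo_apply_self s (by omega), ← countEq_moveFrontTo s (by omega) (Ne.symm h),
    moveToSecond_moveFrontTo s hl, smul_smul, ← mul_pow, mul_inv_cancel₀ hq, one_pow, one_smul]

end Chains

section Tzero
variable {n : ℕ} [NeZero n] {q : ℂ}

lemma Tk_sub_Tzero_bas (hq : q ≠ 0) (Q : ℂ) (hn : 2 ≤ n) (s : Fin n → Fin 2) (h : s 0 ≠ s 1) :
    (Tk n q 1 - q • 1) (Tzero n q Q (bas s)) =
      (-q * if s 0 = 0 then Q else -Q⁻¹) • (Tk n q 1 - q • 1) (bas (swapAt s 0 1)) := by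
  obtain ⟨l, hl⟩ : ∃ l, n = l + 2 := ⟨n - 2, by omega⟩
  rw [Tzero_eq Q hl, Module.End.mul_apply, Module.End.mul_apply, Module.End.mul_apply,
    ← Module.End.mul_apply (Tk n q 1 - q • 1), Tk_sub_mul_TopInv hq, LinearMap.smul_apply,
    piOp_bas]
  split_ifs <;>
    rw [map_smul, map_smul, map_smul, Tk_sub_TopInvProd_SopProd_bas hq hl s h, smul_smul]

lemma Tk_one_sub_bas_swapAt (hq : q ≠ 0) (s : Fin n → Fin 2) (h0 : s 0 = 0) (h1 : s 1 = 1) :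
    (Tk n q 1 - q • 1) (bas (swapAt s 0 1)) = (-q) • (Tk n q 1 - q • 1) (bas s) := by
  simp only [Tk_one_sub_bas, swapAt_apply_left, swapAt_apply_right, swapAt_swapAt, h0, h1,
    Fin.reduceEq, reduceIte]
  match_scalars <;> field_simp

lemma Tk_sub_Tzero_sub_Tk_sub_bas (hn : 2 ≤ n) (hq : q ≠ 0) {Q : ℂ} (hQ : Q ≠ 0)
    (s : Fin n → Fin 2) (h0 : s 0 = 0) (h1 : s 1 = 1) :
    (Tk n q 1 - q • 1) ((Tzero n q Q - Q • 1) ((Tk n q 1 - q • 1) (bas s))) =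
      (Q / q + q / Q) • (Tk n q 1 - q • 1) (bas s) := by
  have h01 : s 0 ≠ s 1 := by rw [h0, h1]; decide
  have h01' : swapAt s 0 1 0 ≠ swapAt s 0 1 1 := by
    rw [swapAt_apply_left, swapAt_apply_right]; exact h01.symm
  have hw : (Tk n q 1 - q • 1) (bas s) = bas (swapAt s 0 1) - q⁻¹ • bas s := by
    rw [Tk_one_sub_bas, if_neg h01, if_neg (by rw [h0]; decide)]
  have hT0 : (Tk n q 1 - q • 1) (Tzero n q Q (bas (swapAt s 0 1) - q⁻¹ • bas s)) =
      (q * Q⁻¹ - q * Q) • (Tk n q 1 - q • 1) (bas s) := by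
    rw [map_sub, map_smul, map_sub, map_smul, Tk_sub_Tzero_bas hq Q hn _ h01',
      Tk_sub_Tzero_bas hq Q hn _ h01, swapAt_swapAt, Tk_one_sub_bas_swapAt hq s h0 h1,
      swapAt_apply_left, h1, h0, if_neg (by decide), if_pos rfl]
    match_scalars
    field_simp
  have hT1 : (Tk n q 1 - q • 1) (bas (swapAt s 0 1) - q⁻¹ • bas s) =
      (-q - q⁻¹) • (Tk n q 1 - q • 1) (bas s) := by
    rw [map_sub, map_smul, Tk_one_sub_bas_swapAt hq s h0 h1]
    module
  rw [hw, LinearMap.sub_apply (Tzero n q Q), LinearMap.smul_apply, Module.End.one_apply, map_sub,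
    map_smul, hT0, hT1, ← hw]
  match_scalars
  field_simp
  ring

lemma Tk_sub_mul_Tzero_sub_mul_Tk_sub (hn : 2 ≤ n) (hq : q ≠ 0) {Q : ℂ} (hQ : Q ≠ 0) :
    (Tk n q 1 - q • 1) * (Tzero n q Q - Q • 1) * (Tk n q 1 - q • 1) =
      (Q / q + q / Q) • (Tk n q 1 - q • 1) := by
  refine endo_ext_bas fun s => ?_
  rw [Module.End.mul_apply, Module.End.mul_apply, LinearMap.smul_apply]
  obtain heq | hne := eq_or_ne (s 0) (s 1)
  · rw [Tk_one_sub_bas, if_pos heq, map_zero, map_zero, smul_zero]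
  obtain h0 | h0 := fin_two_eq_zero_or_one (s 0)
  · have h1 : s 1 = 1 := (fin_two_eq_zero_or_one _).resolve_left (h0 ▸ hne.symm)
    exact Tk_sub_Tzero_sub_Tk_sub_bas hn hq hQ s h0 h1
  · have h1 : s 1 = 0 := (fin_two_eq_zero_or_one _).resolve_right (h0 ▸ hne.symm)
    have h0' : swapAt s 0 1 0 = 0 := by rw [swapAt_apply_left, h1]
    have h1' : swapAt s 0 1 1 = 1 := by rw [swapAt_apply_right, h0]
    have hs := Tk_one_sub_bas_swapAt hq _ h0' h1'
    rw [swapAt_swapAt] at hs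
    rw [hs, map_smul, map_smul, Tk_sub_Tzero_sub_Tk_sub_bas hn hq hQ _ h0' h1', smul_comm]

end Tzero

theorem statement11_general (n : ℕ) [NeZero n] (hn : 3 ≤ n) (q : ℂ) (hq0 : q ≠ 0)
    (m : ℤ) (Q : ℂ) (hQ : Q = Complex.I * q ^ m) :
    (Tk n q 1 - q • 1) * (Tk n q 2 - q • 1) * (Tk n q 1 - q • 1) -
        (Tk n q 1 - q • 1) = 0 ∧
      (Tk n q 1 - q • 1) * (Tzero n q Q - Q • 1) * (Tk n q 1 - q • 1) -
        (Q / q + q / Q) • (Tk n q 1 - q • 1) = 0 := by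
  have hQ0 : Q ≠ 0 := hQ ▸ mul_ne_zero Complex.I_ne_zero (zpow_ne_zero m hq0)
  exact ⟨sub_eq_zero.mpr (Tk_sub_mul_Tk_sub_mul_Tk_sub (k := 0) hq0 (by omega)),
    sub_eq_zero.mpr (Tk_sub_mul_Tzero_sub_mul_Tk_sub (by omega) hq0 hQ0)⟩

/-- The generators of the ideal `J_n` of the type `B` Hecke algebra annihilate the
Ariki–Terasoma–Yamada tensor space: the endomorphisms
`(T_1 - q)(T_2 - q)(T_1 - q) - (T_1 - q)` and
`(T_1 - q)(T_0 - Q)(T_1 - q) - [2]_{Q/q}(T_1 - q)` of `V^{⊗n}` are zero. -/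
theorem statement11 (n : ℕ) [NeZero n] (hn : 3 ≤ n) (q : ℂ) (hq0 : q ≠ 0)
    (hq1 : q ≠ 1) (hqm1 : q ≠ -1) (m : ℤ) (Q : ℂ) (hQ : Q = Complex.I * q ^ m) :
    (Tk n q 1 - q • 1) * (Tk n q 2 - q • 1) * (Tk n q 1 - q • 1) -
        (Tk n q 1 - q • 1) = 0 ∧
      (Tk n q 1 - q • 1) * (Tzero n q Q - Q • 1) * (Tk n q 1 - q • 1) -
        (Q / q + q / Q) • (Tk n q 1 - q • 1) = 0 :=
  statement11_general n hn q hq0 m Q hQ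

end
end

section
/- Let (A, ≤) be a linearly ordered set and let v be a word over A obtained from a word w by a single elementary Knuth transformation: replacing a consecutive factor y z x by y x z, or a consecutive factor x z y by z x y, where x < y < z in A, or the inverse of either replacement. Then the maximum length of a decreasing subsequence of v equals the maximum length of a decreasing subsequence of w. -/
/-!
A decreasing subsequence of `l₁ ++ m ++ l₂` splits as `u₁ ++ t ++ u₂` with `t` a decreasing
subsequence of the middle block `m`, and it stays decreasing when `t` is replaced by any
decreasing `t'` whose first letter is no larger and whose last letter is no smaller. For each
of the four three-letter Knuth moves, every decreasing subsequence of one side has such a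
replacement of the same length in the other side (a finite check over the eight sublists),
so the maximum lengths agree in both directions.
-/

/-- `v` is obtained from `w` by a single elementary Knuth transformation over the
linearly ordered alphabet `A`: replacing a consecutive factor `y z x` by `y x z`, or a
consecutive factor `x z y` by `z x y`, where `x < y < z`, or the inverse of either
replacement. -/
def ElemKnuth {A : Type*} [LinearOrder A] (w v : List A) : Prop :=
  ∃ l₁ l₂ : List A, ∃ x y z : A, x < y ∧ y < z ∧
    ((w = l₁ ++ [y, z, x] ++ l₂ ∧ v = l₁ ++ [y, x, z] ++ l₂) ∨
     (w = l₁ ++ [y, x, z] ++ l₂ ∧ v = l₁ ++ [y, z, x] ++ l₂) ∨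
     (w = l₁ ++ [x, z, y] ++ l₂ ∧ v = l₁ ++ [z, x, y] ++ l₂) ∨
     (w = l₁ ++ [z, x, y] ++ l₂ ∧ v = l₁ ++ [x, z, y] ++ l₂))

/-- the maximum length of a decreasing subsequence of a word over a linearly
ordered alphabet -/
noncomputable def maxDecLen {A : Type*} [LinearOrder A] (u : List A) : ℕ :=
  sSup {k | ∃ v : List A, v.Sublist u ∧ v.Chain' (· > ·) ∧ v.length = k}

open List

section

variable {α : Type*}

theorem List.IsChain.append_append_of_rel [Preorder α] {u₁ t t' u₂ : List α}
    (h : (u₁ ++ t ++ u₂).IsChain (· > ·)) (ht' : t'.IsChain (· > ·))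
    (hhead : Option.Rel (· ≥ ·) t.head? t'.head?)
    (hlast : Option.Rel (· ≤ ·) t.getLast? t'.getLast?) :
    (u₁ ++ t' ++ u₂).IsChain (· > ·) := by
  rcases eq_or_ne t [] with rfl | ht
  · obtain rfl : t' = [] := by cases t' <;> simp_all
    exact h
  have ht'ne : t' ≠ [] := by rintro rfl; simp [head?_eq_some_head ht] at hhead
  rw [head?_eq_some_head ht, head?_eq_some_head ht'ne, Option.rel_some_some] at hhead
  rw [getLast?_eq_some_getLast ht, getLast?_eq_some_getLast ht'ne, Option.rel_some_some] at hlast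
  rw [isChain_append, isChain_append] at h ⊢
  obtain ⟨⟨hu₁, -, hlink₁⟩, hu₂, hlink₂⟩ := h
  refine ⟨⟨hu₁, ht', fun a ha b hb => ?_⟩, hu₂, fun a ha b hb => ?_⟩
  · rw [head?_eq_some_head ht'ne, Option.mem_some_iff] at hb
    exact hb ▸ lt_of_le_of_lt hhead (hlink₁ a ha _ (head?_eq_some_head ht))
  · rw [getLast?_append_of_ne_nil _ ht'ne, getLast?_eq_some_getLast ht'ne,
      Option.mem_some_iff] at ha
    refine ha ▸ lt_of_lt_of_le (hlink₂ _ ?_ b hb) hlast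
    rw [getLast?_append_of_ne_nil _ ht, getLast?_eq_some_getLast ht]
    rfl

def DecTransfer [Preorder α] (m₁ m₂ : List α) : Prop :=
  ∀ t : List α, t <+ m₁ → t.IsChain (· > ·) →
    ∃ t' : List α, t' <+ m₂ ∧ t'.IsChain (· > ·) ∧ t'.length = t.length ∧
      Option.Rel (· ≥ ·) t.head? t'.head? ∧ Option.Rel (· ≤ ·) t.getLast? t'.getLast?

variable [LinearOrder α]

theorem maxDecLen_le_of_forall_exists {u u' : List α}
    (h : ∀ s : List α, s <+ u → s.IsChain (· > ·) →
      ∃ s' : List α, s' <+ u' ∧ s'.IsChain (· > ·) ∧ s'.length = s.length) :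
    maxDecLen u ≤ maxDecLen u' := by
  refine csSup_le_csSup ⟨u'.length, ?_⟩ ⟨0, [], nil_sublist _, isChain_nil, rfl⟩ ?_
  · rintro k ⟨s', hs', -, rfl⟩
    exact hs'.length_le
  · rintro k ⟨s, hs, hc, rfl⟩
    exact h s hs hc

theorem DecTransfer.maxDecLen_append_append_le {m₁ m₂ : List α} (H : DecTransfer m₁ m₂)
    (l₁ l₂ : List α) : maxDecLen (l₁ ++ m₁ ++ l₂) ≤ maxDecLen (l₁ ++ m₂ ++ l₂) := by
  refine maxDecLen_le_of_forall_exists fun s hs hc => ?_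
  obtain ⟨s₁, u₂, rfl, hs₁, hu₂⟩ := sublist_append_iff.mp hs
  obtain ⟨u₁, t, rfl, hu₁, ht⟩ := sublist_append_iff.mp hs₁
  obtain ⟨t', ht', hct', hlen, hhead, hlast⟩ := H t ht hc.left_of_append.right_of_append
  exact ⟨u₁ ++ t' ++ u₂, (hu₁.append ht').append hu₂,
    hc.append_append_of_rel hct' hhead hlast, by simp [hlen]⟩

theorem decTransfer_knuth {x y z : α} (hxy : x < y) (hyz : y < z) :
    DecTransfer [y, z, x] [y, x, z] ∧ DecTransfer [y, x, z] [y, z, x] ∧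
      DecTransfer [x, z, y] [z, x, y] ∧ DecTransfer [z, x, y] [x, z, y] := by
  have hxz := hxy.trans hyz
  refine ⟨?_, ?_, ?_, ?_⟩ <;> intro t ht hc <;> simp only [← mem_sublists] at ht ⊢ <;>
    fin_cases ht <;> simp_all [sublists, hxy.le, hyz.le, hxz.le] <;> order

theorem ElemKnuth.exists_decTransfer {w v : List α} (h : ElemKnuth w v) :
    ∃ l₁ l₂ m₁ m₂ : List α, w = l₁ ++ m₁ ++ l₂ ∧ v = l₁ ++ m₂ ++ l₂ ∧
      DecTransfer m₁ m₂ ∧ DecTransfer m₂ m₁ := by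
  obtain ⟨l₁, l₂, x, y, z, hxy, hyz, hcase⟩ := h
  obtain ⟨h₁, h₂, h₃, h₄⟩ := decTransfer_knuth hxy hyz
  rcases hcase with ⟨rfl, rfl⟩ | ⟨rfl, rfl⟩ | ⟨rfl, rfl⟩ | ⟨rfl, rfl⟩
  exacts [⟨l₁, l₂, _, _, rfl, rfl, h₁, h₂⟩, ⟨l₁, l₂, _, _, rfl, rfl, h₂, h₁⟩,
    ⟨l₁, l₂, _, _, rfl, rfl, h₃, h₄⟩, ⟨l₁, l₂, _, _, rfl, rfl, h₄, h₃⟩]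

end

/-- An elementary Knuth transformation preserves the maximum length of a decreasing
subsequence. -/
theorem statement12 {A : Type*} [LinearOrder A] (w v : List A) (h : ElemKnuth w v) :
    maxDecLen w = maxDecLen v := by
  obtain ⟨l₁, l₂, m₁, m₂, rfl, rfl, h₁₂, h₂₁⟩ := h.exists_decTransfer
  exact le_antisymm (h₁₂.maxDecLen_append_append_le l₁ l₂) (h₂₁.maxDecLen_append_append_le l₁ l₂)
end
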